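/- arXiv:1204.4778 — 9 statements merged into one kernel-verified Lean document; each statement's English description precedes it below -/
import Mathlib

section
/- Let K be a field, V an n-dimensional K-vector space (n ≥ 1) with basis ε_1, …, ε_n, and T_1, …, T_n ∈ GL(V) generalised reflections such that for each i the image of T_i − 1 equals the line K ε_i, such that (T_i − 1)(ε_{i+1}) = b_i ε_i with b_i ≠ 0 for all 1 ≤ i ≤ n−1, and (T_i − 1)(ε_{i−1}) = a_i ε_i with a_i ≠ 0 for all 2 ≤ i ≤ n. Let Δ be the subgroup of GL(V) generated by T_1, …, T_n and let V^Δ = {v ∈ V : γ v = v for all γ ∈ Δ}. Then every Δ-invariant K-subspace W of V with W ≠ V is contained in V^Δ; consequently, every Δ-invariant subspace of the quotient Δ-module V/V^Δ is either 0 or all of V/V^Δ. -/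
/-!
If an invariant subspace `W` contains a vector `w` moved by some `Tᵢ`, then `Tᵢ w - w ∈ W` is a
nonzero multiple of `εᵢ`, so `εᵢ ∈ W`. The same argument applied to `εᵢ` and the neighbouring
reflections, whose action on `εᵢ` is nontrivial by `aᵢ, bᵢ ≠ 0`, spreads this along the chain
`ε₁, …, εₙ`, so `W = V`. Hence a proper invariant subspace is fixed pointwise by every generator,
and so by `Δ`.
-/

open Submodule

theorem SimpleGraph.Preconnected.forall_of_adj_imp {ι : Type*} {G : SimpleGraph ι}
    (hG : G.Preconnected) {p : ι → Prop} (hp : ∀ i j, G.Adj i j → p i → p j) {i : ι}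
    (hi : p i) (j : ι) : p j := by
  induction SimpleGraph.reachable_iff_reflTransGen i j |>.1 (hG i j) with
  | refl => exact hi
  | tail _ hadj ih => exact hp _ _ hadj ih

theorem Subgroup.forall_mem_closure_range_apply_eq {K V ι : Type*} [Semiring K]
    [AddCommMonoid V] [Module K V] {T : ι → V ≃ₗ[K] V} {v : V} (hv : ∀ i, T i v = v) :
    ∀ γ ∈ Subgroup.closure (Set.range T), γ v = v := fun _ hγ =>
  (Subgroup.closure_le (MulAction.stabilizer (V ≃ₗ[K] V) v)).2
    (Set.range_subset_iff.2 hv) hγ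

section Reflections

variable {K V : Type*} [Field K] [AddCommGroup V] [Module K V]

theorem Submodule.mem_of_apply_ne {f : Module.End K V} {e : V}
    (hf : LinearMap.range (f - LinearMap.id) ≤ span K {e}) {W : Submodule K V}
    (hW : ∀ w ∈ W, f w ∈ W) {w : V} (hw : w ∈ W) (hne : f w ≠ w) : e ∈ W := by
  obtain ⟨c, hc⟩ := mem_span_singleton.1 (hf ⟨w, rfl⟩)
  have hc0 : c ≠ 0 := by
    rintro rfl
    exact hne (sub_eq_zero.1 (by simpa using hc.symm))
  have hmem : c • e ∈ W := by
    rw [hc]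
    exact W.sub_mem (hW w hw) hw
  exact (W.smul_mem_iff hc0).1 hmem

variable {ι : Type*} {G : SimpleGraph ι} (ε : Module.Basis ι K V) {T : ι → Module.End K V}
  (hrange : ∀ i, LinearMap.range (T i - LinearMap.id) ≤ span K {ε i})
  (hmove : ∀ i j, G.Adj i j → T i (ε j) ≠ ε j)
  {W : Submodule K V} (hW : ∀ i, ∀ w ∈ W, T i w ∈ W)
include hrange hmove hW

theorem Submodule.eq_top_of_basis_mem (hG : G.Preconnected) {i : ι} (hi : ε i ∈ W) :
    W = ⊤ := by
  have hall : ∀ j, ε j ∈ W := hG.forall_of_adj_imp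
    (fun i j hij hi => mem_of_apply_ne (hrange j) (hW j) hi (hmove j i hij.symm)) hi
  rw [eq_top_iff, ← ε.span_eq, span_le]
  exact Set.range_subset_iff.2 hall

theorem Submodule.apply_eq_of_ne_top (hG : G.Preconnected) (hWtop : W ≠ ⊤) {w : V}
    (hw : w ∈ W) (i : ι) : T i w = w := by
  by_contra hne
  exact hWtop <| eq_top_of_basis_mem ε hrange hmove hW hG <|
    mem_of_apply_ne (hrange i) (hW i) hw hne

end Reflections

theorem stmt_0_general (K : Type*) [Field K] (V : Type*) [AddCommGroup V] [Module K V]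
    (n : ℕ) (ε : Module.Basis (Fin n) K V)
    (T : Fin n → V ≃ₗ[K] V)
    (hrange : ∀ i, LinearMap.range ((T i).toLinearMap - LinearMap.id) =
      Submodule.span K {ε i})
    (hb : ∀ i j : Fin n, (i : ℕ) + 1 = (j : ℕ) →
      ∃ b : K, b ≠ 0 ∧ (T i) (ε j) - ε j = b • ε i)
    (ha : ∀ i j : Fin n, (j : ℕ) + 1 = (i : ℕ) →
      ∃ a : K, a ≠ 0 ∧ (T i) (ε j) - ε j = a • ε i)
    (Δ : Subgroup (V ≃ₗ[K] V)) (hΔ : Δ = Subgroup.closure (Set.range T))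
    (Vfix : Submodule K V) (hVfix : ∀ v : V, v ∈ Vfix ↔ ∀ γ ∈ Δ, γ v = v) :
    (∀ W : Submodule K V, (∀ γ ∈ Δ, ∀ w ∈ W, γ w ∈ W) → W ≠ ⊤ → W ≤ Vfix) ∧
    (∀ U : Submodule K V, Vfix ≤ U → (∀ γ ∈ Δ, ∀ u ∈ U, γ u ∈ U) →
      U = Vfix ∨ U = ⊤) := by
  have hmove : ∀ i j, (SimpleGraph.pathGraph n).Adj i j → T i (ε j) ≠ ε j := by
    intro i j hij
    obtain ⟨c, hc, hcε⟩ := (SimpleGraph.pathGraph_adj.1 hij).elim (hb i j) (ha i j)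
    rw [← sub_ne_zero, hcε]
    exact smul_ne_zero hc (ε.ne_zero i)
  have hTmem : ∀ i, T i ∈ Δ := fun i => hΔ ▸ Subgroup.subset_closure (Set.mem_range_self i)
  have hproper : ∀ W : Submodule K V, (∀ γ ∈ Δ, ∀ w ∈ W, γ w ∈ W) → W ≠ ⊤ → W ≤ Vfix := by
    intro W hW hWtop w hw
    rw [hVfix, hΔ]
    exact Subgroup.forall_mem_closure_range_apply_eq fun i =>
      apply_eq_of_ne_top ε (fun i => (hrange i).le) hmove (fun i => hW _ (hTmem i))
        (SimpleGraph.pathGraph_preconnected n) hWtop hw i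
  refine ⟨hproper, fun U hle hU => ?_⟩
  by_cases hUtop : U = ⊤
  · exact Or.inr hUtop
  · exact Or.inl (le_antisymm (hproper U hU hUtop) hle)

/-- Let `K` be a field, `V` an `n`-dimensional `K`-vector space (`n ≥ 1`)
with basis `ε`, and `T i` generalised reflections (image of `T i - 1` equals the line `K • ε i`)
with `(T i - 1)(ε (i+1)) = b i • ε i`, `b i ≠ 0`, and `(T i - 1)(ε (i-1)) = a i • ε i`, `a i ≠ 0`.
Let `Δ` be the subgroup generated by the `T i` and `Vfix` the space of `Δ`-invariant vectors.
Then every `Δ`-invariant subspace `W ≠ V` is contained in `Vfix`; consequently every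
`Δ`-invariant subspace of `V / Vfix` (equivalently, every invariant subspace of `V`
containing `Vfix`) is either trivial or everything. -/
theorem stmt_0 (K : Type*) [Field K] (V : Type*) [AddCommGroup V] [Module K V]
    (n : ℕ) (hn : 1 ≤ n) (ε : Module.Basis (Fin n) K V)
    (T : Fin n → V ≃ₗ[K] V)
    (hrange : ∀ i, LinearMap.range ((T i).toLinearMap - LinearMap.id) =
      Submodule.span K {ε i})
    (hb : ∀ i j : Fin n, (i : ℕ) + 1 = (j : ℕ) →
      ∃ b : K, b ≠ 0 ∧ (T i) (ε j) - ε j = b • ε i)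
    (ha : ∀ i j : Fin n, (j : ℕ) + 1 = (i : ℕ) →
      ∃ a : K, a ≠ 0 ∧ (T i) (ε j) - ε j = a • ε i)
    (Δ : Subgroup (V ≃ₗ[K] V)) (hΔ : Δ = Subgroup.closure (Set.range T))
    (Vfix : Submodule K V) (hVfix : ∀ v : V, v ∈ Vfix ↔ ∀ γ ∈ Δ, γ v = v) :
    (∀ W : Submodule K V, (∀ γ ∈ Δ, ∀ w ∈ W, γ w ∈ W) → W ≠ ⊤ → W ≤ Vfix) ∧
    (∀ U : Submodule K V, Vfix ≤ U → (∀ γ ∈ Δ, ∀ u ∈ U, γ u ∈ U) →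
      U = Vfix ∨ U = ⊤) :=
  stmt_0_general K V n ε T hrange hb ha Δ hΔ Vfix hVfix
end

section
/- Let K be a field, V an n-dimensional K-vector space (n ≥ 1) with basis ε_1, …, ε_n, and T_1, …, T_n ∈ GL(V) generalised reflections such that for each i the image of T_i − 1 equals the line K ε_i, such that (T_i − 1)(ε_{i+1}) = b_i ε_i with b_i ≠ 0 for all 1 ≤ i ≤ n−1, (T_i − 1)(ε_{i−1}) = a_i ε_i with a_i ≠ 0 for all 2 ≤ i ≤ n, and additionally T_i(ε_j) = ε_j whenever |i − j| ≥ 2. Let Δ be the subgroup of GL(V) generated by T_1, …, T_n. Then the space V^Δ = {v ∈ V : γ v = v for all γ ∈ Δ} of Δ-invariant vectors has dimension at most one over K. -/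
/-!
Write a `Δ`-invariant vector as `v = ∑ vⱼ εⱼ`. If `v₀ = … = vₖ = 0`, then every basis vector
left in the support of `v` other than `εₖ₊₁` is fixed by `Tₖ`, so
`0 = (Tₖ - 1) v = vₖ₊₁ (Tₖ - 1) εₖ₊₁ = vₖ₊₁ bₖ εₖ` and hence `vₖ₊₁ = 0`. Thus an invariant
vector is determined by its first coordinate, and `v ↦ v₀` embeds `V^Δ` into `K`.
-/

namespace Module.Basis

variable {K V : Type*} [Field K] [AddCommGroup V] [Module K V]

theorem repr_eq_zero_of_apply_eq_self {ι : Type*} [Fintype ι]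
    (ε : Basis ι K V) {T : V →ₗ[K] V} {v : V} (hv : T v = v) {j : ι} (hj : T (ε j) ≠ ε j)
    (hfix : ∀ l, l ≠ j → ε.repr v l ≠ 0 → T (ε l) = ε l) :
    ε.repr v j = 0 := by
  have hsum : T v - v = ε.repr v j • (T (ε j) - ε j) := by
    conv_lhs => rw [← ε.sum_repr v]
    simp only [map_sum, map_smul, ← Finset.sum_sub_distrib, ← smul_sub]
    refine Finset.sum_eq_single j (fun l _ hlj => ?_) (by simp)
    by_cases hl : ε.repr v l = 0
    · rw [hl, zero_smul]
    · rw [hfix l hlj hl, sub_self, smul_zero]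
  rw [hv, sub_self, eq_comm, smul_eq_zero] at hsum
  exact hsum.resolve_right (sub_ne_zero.mpr hj)

theorem eq_zero_of_forall_apply_eq_self {n : ℕ} (hn : 1 ≤ n)
    (ε : Basis (Fin n) K V) {T : Fin n → V →ₗ[K] V}
    (hnext : ∀ i j : Fin n, (i : ℕ) + 1 = j → T i (ε j) ≠ ε j)
    (hfar : ∀ i j : Fin n, (i : ℕ) + 2 ≤ j → T i (ε j) = ε j)
    {v : V} (hv : ∀ i, T i v = v) (h₀ : ε.repr v ⟨0, hn⟩ = 0) :
    v = 0 := by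
  suffices h : ∀ m : ℕ, ∀ j : Fin n, (j : ℕ) ≤ m → ε.repr v j = 0 from
    ε.repr.injective (Finsupp.ext fun j => by simpa using h j j le_rfl)
  intro m
  induction m with
  | zero =>
    intro j hj
    obtain rfl : j = ⟨0, hn⟩ := Fin.ext (Nat.le_zero.mp hj)
    exact h₀
  | succ m ih =>
    intro j hj
    rcases Nat.lt_or_ge m j with hmj | hjm
    · have hj' : (j : ℕ) = m + 1 := by omega
      let i : Fin n := ⟨m, by omega⟩
      refine ε.repr_eq_zero_of_apply_eq_self (hv i) (hnext i j hj'.symm) fun l hlj hl => ?_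
      have hjl : (j : ℕ) ≠ l := fun h => hlj (Fin.ext h.symm)
      have hml : m < l := lt_of_not_ge fun hlm => hl (ih l hlm)
      exact hfar i l (by simp only [i]; omega)
    · exact ih j hjm

end Module.Basis

theorem stmt_1_general (K : Type*) [Field K] (V : Type*) [AddCommGroup V] [Module K V]
    (n : ℕ) (hn : 1 ≤ n) (ε : Module.Basis (Fin n) K V)
    (T : Fin n → V ≃ₗ[K] V)
    (hb : ∀ i j : Fin n, (i : ℕ) + 1 = (j : ℕ) →
      ∃ b : K, b ≠ 0 ∧ (T i) (ε j) - ε j = b • ε i)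
    (hfar : ∀ i j : Fin n, ((i : ℕ) + 2 ≤ (j : ℕ) ∨ (j : ℕ) + 2 ≤ (i : ℕ)) →
      (T i) (ε j) = ε j)
    (Δ : Subgroup (V ≃ₗ[K] V)) (hΔ : Δ = Subgroup.closure (Set.range T))
    (Vfix : Submodule K V) (hVfix : ∀ v : V, v ∈ Vfix ↔ ∀ γ ∈ Δ, γ v = v) :
    Module.finrank K Vfix ≤ 1 := by
  have hnext : ∀ i j : Fin n, (i : ℕ) + 1 = j → T i (ε j) ≠ ε j := by
    intro i j hij
    obtain ⟨b, hb₀, hbij⟩ := hb i j hij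
    rw [← sub_ne_zero, hbij]
    exact smul_ne_zero hb₀ (ε.ne_zero i)
  have hinv : ∀ v ∈ Vfix, ∀ i, T i v = v := fun v hv i =>
    (hVfix v).mp hv _ (hΔ ▸ Subgroup.subset_closure ⟨i, rfl⟩)
  let f : Vfix →ₗ[K] K := (ε.coord ⟨0, hn⟩).comp Vfix.subtype
  have hf : Function.Injective f := by
    rw [← LinearMap.ker_eq_bot, LinearMap.ker_eq_bot']
    rintro ⟨v, hv⟩ hfv
    exact Subtype.ext <| ε.eq_zero_of_forall_apply_eq_self hn (T := fun i => (T i).toLinearMap)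
      hnext (fun i j hij => hfar i j (Or.inl hij)) (hinv v hv) hfv
  calc Module.finrank K Vfix ≤ Module.finrank K K := LinearMap.finrank_le_finrank_of_injective hf
    _ = 1 := Module.finrank_self K

/-- With the setup of Statement 0, assuming additionally that
`T i (ε j) = ε j` whenever `|i - j| ≥ 2`, the space `Vfix` of `Δ`-invariant vectors
has dimension at most one over `K`. -/
theorem stmt_1 (K : Type*) [Field K] (V : Type*) [AddCommGroup V] [Module K V]
    (n : ℕ) (hn : 1 ≤ n) (ε : Module.Basis (Fin n) K V)
    (T : Fin n → V ≃ₗ[K] V)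
    (hrange : ∀ i, LinearMap.range ((T i).toLinearMap - LinearMap.id) =
      Submodule.span K {ε i})
    (hb : ∀ i j : Fin n, (i : ℕ) + 1 = (j : ℕ) →
      ∃ b : K, b ≠ 0 ∧ (T i) (ε j) - ε j = b • ε i)
    (ha : ∀ i j : Fin n, (j : ℕ) + 1 = (i : ℕ) →
      ∃ a : K, a ≠ 0 ∧ (T i) (ε j) - ε j = a • ε i)
    (hfar : ∀ i j : Fin n, ((i : ℕ) + 2 ≤ (j : ℕ) ∨ (j : ℕ) + 2 ≤ (i : ℕ)) →
      (T i) (ε j) = ε j)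
    (Δ : Subgroup (V ≃ₗ[K] V)) (hΔ : Δ = Subgroup.closure (Set.range T))
    (Vfix : Submodule K V) (hVfix : ∀ v : V, v ∈ Vfix ↔ ∀ γ ∈ Δ, γ v = v) :
    Module.finrank K Vfix ≤ 1 :=
  stmt_1_general K V n hn ε T hb hfar Δ hΔ Vfix hVfix
end

section
/- Let n ≥ 2 and for 2 ≤ j ≤ n let E_{1j} denote the n×n complex matrix with entry 1 in position (1, j) and 0 elsewhere. Let X be an n×n complex matrix with trace zero. Then X commutes with E_{1j} for every 2 ≤ j ≤ n if and only if X lies in the linear span of {E_{1j} : 2 ≤ j ≤ n}. In other words, the centralizer in sl_n(ℂ) of the Lie subalgebra 𝔲 spanned by the E_{1j} (2 ≤ j ≤ n) is equal to 𝔲 itself. -/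
/-!
If `X` commutes with every `E_{ij}`, `j ≠ i`, then each row of `X` other than the `i`-th agrees
with that of the scalar matrix `X i i • 1`. Hence `trace X = n • X i i`, so tracelessness kills the
diagonal and leaves `X` supported on the off-diagonal part of row `i`, which is the span of those
`E_{ij}`. Conversely `E_{ik} E_{ij} = 0` for `j, k ≠ i`, so that span commutes with each `E_{ij}`.
-/

namespace Matrix

variable {R ι : Type*} [Fintype ι] [DecidableEq ι] {i : ι} {X : Matrix ι ι R}

section Semiring

variable [Semiring R]

theorem trace_eq_card_nsmul_of_commute_single (h : ∀ j, j ≠ i → Commute (single i j 1) X) :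
    X.trace = Fintype.card ι • X i i := by
  have hdiag : ∀ a, X a a = X i i := fun a => by
    obtain rfl | ha := eq_or_ne a i
    · rfl
    · exact (diag_eq_of_commute_single (h a ha)).symm
  simp only [trace, diag, hdiag, Finset.sum_const, Finset.card_univ]

theorem apply_eq_zero_of_commute_single (h : ∀ j, j ≠ i → Commute (single i j 1) X)
    (hXii : X i i = 0) {a b : ι} (hab : ¬(a = i ∧ b ≠ i)) : X a b = 0 := by
  obtain rfl | ha := eq_or_ne a i
  · rw [not_and_not_right.mp hab rfl, hXii]
  obtain rfl | hba := eq_or_ne b a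
  · rw [← diag_eq_of_commute_single (h b ha), hXii]
  · exact row_eq_zero_of_commute_single (h a ha) hba

theorem mem_span_single_of_apply_eq_zero (h : ∀ a b, ¬(a = i ∧ b ≠ i) → X a b = 0) :
    X ∈ Submodule.span R {M : Matrix ι ι R | ∃ j, j ≠ i ∧ M = single i j 1} := by
  rw [matrix_eq_sum_single X]
  refine Submodule.sum_mem _ fun a _ => Submodule.sum_mem _ fun b _ => ?_
  by_cases hab : a = i ∧ b ≠ i
  · obtain ⟨rfl, hb⟩ := hab
    rw [← mul_one (X a b), ← smul_eq_mul, ← smul_single]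
    exact Submodule.smul_mem _ _ (Submodule.subset_span ⟨b, hb, rfl⟩)
  · rw [h a b hab, single_zero]
    exact Submodule.zero_mem _

end Semiring

theorem span_single_le_centralizer [CommSemiring R] {j : ι} (hj : j ≠ i) :
    Submodule.span R {M : Matrix ι ι R | ∃ k, k ≠ i ∧ M = single i k 1} ≤
      Subalgebra.toSubmodule (Subalgebra.centralizer R {single i j 1}) := by
  refine Submodule.span_le.mpr ?_
  rintro _ ⟨k, hk, rfl⟩
  simp only [SetLike.mem_coe, Subalgebra.mem_toSubmodule, Subalgebra.mem_centralizer_iff,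
    Set.mem_singleton_iff, forall_eq]
  rw [single_mul_single_of_ne _ i j i hj, single_mul_single_of_ne _ i k i hk]

theorem commute_single_iff_mem_span_single [CommSemiring R] [IsAddTorsionFree R]
    (hX : X.trace = 0) :
    (∀ j, j ≠ i → X * single i j 1 = single i j 1 * X) ↔
      X ∈ Submodule.span R {M : Matrix ι ι R | ∃ j, j ≠ i ∧ M = single i j 1} := by
  constructor
  · intro h
    have h' : ∀ j, j ≠ i → Commute (single i j 1) X := fun j hj => (h j hj).symm
    have hcard : Fintype.card ι ≠ 0 := (Fintype.card_pos_iff.mpr ⟨i⟩).ne'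
    have hXii : X i i = 0 := by
      rwa [trace_eq_card_nsmul_of_commute_single h', nsmul_eq_zero_iff_right hcard] at hX
    exact mem_span_single_of_apply_eq_zero fun _ _ => apply_eq_zero_of_commute_single h' hXii
  · intro hmem j hj
    exact ((Subalgebra.mem_centralizer_iff R).mp (span_single_le_centralizer hj hmem) _ rfl).symm

end Matrix

/-- For `n ≥ 2` and a traceless `n × n` complex matrix `X`, `X` commutes
with all the elementary matrices `E 0 j` (`j ≠ 0`) if and only if `X` lies in their span:
the centraliser in `sl_n(ℂ)` of the Lie subalgebra `𝔲` spanned by the `E 0 j` is `𝔲`. -/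
theorem stmt_4 (n : ℕ) (hn : 2 ≤ n) (X : Matrix (Fin n) (Fin n) ℂ)
    (hX : X.trace = 0) :
    (∀ j : Fin n, j ≠ ⟨0, by omega⟩ →
        X * Matrix.single ⟨0, by omega⟩ j 1 =
          Matrix.single ⟨0, by omega⟩ j 1 * X) ↔
      X ∈ Submodule.span ℂ {M : Matrix (Fin n) (Fin n) ℂ |
        ∃ j : Fin n, j ≠ ⟨0, by omega⟩ ∧ M = Matrix.single ⟨0, by omega⟩ j 1} :=
  Matrix.commute_single_iff_mem_span_single hX
end

section
/- Let V be a finite-dimensional complex vector space with dim V ≥ 3, let W and W' be two distinct subspaces of V of codimension one, and let v, v' ∈ V be linearly independent vectors such that V = W ⊕ ℂv and V = W' ⊕ ℂv'. Let S_W = {g ∈ GL(V) : det g = 1, g v = v, g(W) ⊆ W} and S_{W'} = {g ∈ GL(V) : det g = 1, g v' = v', g(W') ⊆ W'}. Then the subgroup of GL(V) generated by S_W ∪ S_{W'} is the full special linear group SL(V) = {g ∈ GL(V) : det g = 1}. -/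
/-!
Over a field, `SL(V)` is generated by the transvections `x ↦ x + f x • u` with `f u = 0`, so it
suffices to show that `H = ⟨S_W ∪ S_W'⟩` contains all of them. Write `W = ker φ` with `φ v = 1`,
and similarly `W' = ker φ'`. Then `S_W` contains every transvection with `u ∈ W` and `f v = 0`.

The transvections `τ_w : x ↦ x + φ x • w` (`w ∈ W`) move `v` and so are not in `S_W`. A product of
an element of `S_W` and one of `S_W'` moves `v'` into `W`; conjugating a transvection of `S_W'` by
it gives some `τ_{w₀}` with `w₀ ≠ 0` (as `dim V ≥ 3`, `W` meets the image of `W'` nontrivially).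
Conjugation by `S_W` turns `τ_{w₀}` into `τ_{w₀ + u}`, whence all `τ_w` lie in `H`, and together
with `S_W` every transvection with direction in `W`. The same holds for `W'`. Finally, since
`W ≠ W'`, every vector is moved into `W` by a transvection with direction in `W'`, so every
transvection is conjugate in `H` to one with direction in `W`.
-/

open Module Submodule

section

variable {K V : Type*} [Field K] [AddCommGroup V] [Module K V]

theorem Submodule.exists_mem_notMem_of_not_le {R M : Type*} [Ring R] [AddCommGroup M]
    [Module R M] {P U₁ U₂ : Submodule R M} (h₁ : ¬ P ≤ U₁) (h₂ : ¬ P ≤ U₂) :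
    ∃ x ∈ P, x ∉ U₁ ∧ x ∉ U₂ := by
  obtain ⟨a, haP, ha₁⟩ := Set.not_subset.1 h₁
  obtain ⟨b, hbP, hb₂⟩ := Set.not_subset.1 h₂
  by_cases ha₂ : a ∈ U₂
  · by_cases hb₁ : b ∈ U₁
    · refine ⟨a + b, add_mem haP hbP, fun h => ha₁ ?_, fun h => hb₂ ?_⟩
      · simpa using sub_mem h hb₁
      · simpa using sub_mem h ha₂
    · exact ⟨b, hbP, hb₁, hb₂⟩
  · exact ⟨a, haP, ha₁, ha₂⟩

theorem LinearIndependent.notMem_span_singleton_of_pair {x y : V}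
    (h : LinearIndependent K ![x, y]) : x ∉ span K {y} := by
  simpa [mem_span_singleton] using (linearIndependent_fin2.1 h).2

namespace Module.Dual

theorem exists_apply_eq_of_notMem {U : Submodule K V} {x : V} (hx : x ∉ U) (c : K) :
    ∃ f : Dual K V, f x = c ∧ ∀ y ∈ U, f y = 0 := by
  obtain ⟨f, hfx, hfU⟩ := U.exists_dual_map_eq_bot_of_notMem hx inferInstance
  refine ⟨(c / f x) • f, by simp [hfx], fun y hy => ?_⟩
  have : f y = 0 := by simpa [hfU] using mem_map_of_mem (f := f) hy
  simp [this]

theorem exists_ker_eq_of_isCompl {W : Submodule K V} {v : V} (hv : v ≠ 0)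
    (h : IsCompl W (span K {v})) : ∃ φ : Dual K V, LinearMap.ker φ = W ∧ φ v = 1 := by
  refine ⟨(LinearEquiv.toSpanNonzeroSingleton K V v hv).symm.toLinearMap ∘ₗ
    projectionOnto _ _ h.symm, ?_, ?_⟩
  · rw [LinearEquiv.ker_comp, ker_projectionOnto]
  · have := projectionOnto_apply_left h.symm ⟨v, mem_span_singleton_self v⟩
    simp only [LinearMap.coe_comp, Function.comp_apply, LinearEquiv.coe_coe] at this ⊢
    rw [this, LinearEquiv.symm_apply_eq, LinearEquiv.toSpanNonzeroSingleton_one]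

theorem ker_sup_span_singleton_eq_top {φ : Dual K V} {x : V} (hx : φ x ≠ 0) :
    LinearMap.ker φ ⊔ span K {x} = ⊤ := by
  refine eq_top_iff.2 fun y _ => mem_sup.2 ⟨y - (φ y / φ x) • x, ?_, (φ y / φ x) • x,
    smul_mem _ _ (mem_span_singleton_self x), sub_add_cancel _ _⟩
  simp [hx]

theorem not_ker_le_span_pair (h3 : 3 ≤ finrank K V) {φ : Dual K V} {x : V} (hx : φ x ≠ 0)
    (y : V) : ¬ LinearMap.ker φ ≤ span K {x, y} := by
  classical
  intro hle
  have htop : span K {x, y} = ⊤ := eq_top_iff.2 <| ker_sup_span_singleton_eq_top hx ▸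
    sup_le hle (span_mono (by simp))
  have h2 : finrank K (span K ({x, y} : Set V)) ≤ 2 := by
    have := (finrank_span_finset_le_card (R := K) ({x, y} : Finset V)).trans Finset.card_le_two
    rwa [Set.finrank, Finset.coe_pair] at this
  rw [htop, finrank_top] at h2
  omega

variable [FiniteDimensional K V]

theorem ker_eq_of_ker_le {φ ψ : Dual K V} (hφ : φ ≠ 0) (hψ : ψ ≠ 0)
    (h : LinearMap.ker φ ≤ LinearMap.ker ψ) : LinearMap.ker φ = LinearMap.ker ψ :=
  eq_of_le_of_finrank_le h (by
    have := finrank_ker_add_one_of_ne_zero hφ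
    have := finrank_ker_add_one_of_ne_zero hψ
    omega)

theorem ker_inf_ker_ne_bot (h3 : 3 ≤ finrank K V) (φ ψ : Dual K V) :
    LinearMap.ker φ ⊓ LinearMap.ker ψ ≠ ⊥ := by
  rw [← LinearMap.ker_prod, ← one_le_finrank_iff]
  have := (φ.prod ψ).finrank_range_add_finrank_ker
  have := (φ.prod ψ).range.finrank_le
  simp only [finrank_prod, finrank_self, Nat.reduceAdd] at this
  omega

end Module.Dual

namespace LinearEquiv

theorem det_eq_one_iff {e : V ≃ₗ[K] V} :
    LinearEquiv.det e = 1 ↔ LinearMap.det (e : V →ₗ[K] V) = 1 := by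
  rw [← Units.val_eq_one, coe_det]

theorem transvection.conj (g : V ≃ₗ[K] V) {f f' : Dual K V} {u u' : V}
    (h : f u = 0) (hf : ∀ x, f' (g x) = f x) (hu : g u = u') :
    g * transvection h * g⁻¹ = transvection (f := f') (v := u') (by rw [← hu, hf, h]) := by
  ext x
  rw [mul_apply, mul_apply, coe_inv, transvection.apply, transvection.apply, map_add, map_smul,
    apply_symm_apply, ← hf, apply_symm_apply, hu]

theorem transvection.mul_of_left_eq {f : Dual K V} {u w : V} (hu : f u = 0) (hw : f w = 0) :
    transvection hu * transvection hw =
      transvection (f := f) (v := u + w) (by simp [hu, hw]) := by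
  rw [mul_eq_trans, transvection.trans_of_left_eq hu hw (by simp [hu, hw])]

end LinearEquiv

namespace Matrix.SpecialLinearGroup

theorem diag2n_eq_transvection_mul {ι : Type*} [Fintype ι] [DecidableEq ι] {i j : ι}
    (hij : i ≠ j) (a : K) (ha : a ≠ 0) :
    diag2n hij a ha = transvection hij a * transvection hij.symm (-a⁻¹) * transvection hij a *
      transvection hij (-1) * transvection hij.symm 1 * transvection hij (-1) := by
  ext p q
  simp only [diag2n_coe, coe_mul, transvection_coe, mul_add, add_mul, one_mul, mul_one,
    single_mul_single_same, single_mul_single_of_ne _ _ _ _ hij,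
    single_mul_single_of_ne _ _ _ _ hij.symm, add_zero]
  simp only [Matrix.add_apply, Matrix.one_apply, Matrix.single_apply, diagonal_apply]
  grind [inv_mul_cancel₀, mul_inv_cancel₀]

theorem toLin_equiv_transvection {ι : Type*} [Fintype ι] [DecidableEq ι] (b : Basis ι K V)
    {i j : ι} (hij : i ≠ j) (c : K) :
    (toLin_equiv b (transvection hij c) : V ≃ₗ[K] V) =
      LinearEquiv.transvection (f := c • b.coord j) (v := b i) (by simp [hij.symm]) := by
  apply LinearEquiv.toLinearMap_injective
  rw [toLin_equiv.toLinearMap_eq]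
  refine b.ext fun k => ?_
  simp [Matrix.toLin_self, transvection_coe, Matrix.single_apply, LinearMap.transvection.apply,
    Finsupp.single_apply, ite_and, eq_comm]

end Matrix.SpecialLinearGroup

open Matrix.SpecialLinearGroup in
theorem LinearEquiv.mem_closure_transvections_of_det_eq_one [FiniteDimensional K V]
    {g : V ≃ₗ[K] V} (hg : LinearEquiv.det g = 1) :
    g ∈ Subgroup.closure (LinearEquiv.transvections K V) := by
  let b := finBasis K V
  let T := (Subgroup.closure (LinearEquiv.transvections K V)).comap
    (SpecialLinearGroup.toLinearEquiv.comp (toLin_equiv b).toMonoidHom)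
  suffices h : (toLin_equiv b).symm ⟨g, hg⟩ ∈ T by
    simp only [T, Subgroup.mem_comap, MonoidHom.comp_apply, MulEquiv.coe_toMonoidHom,
      MulEquiv.apply_symm_apply] at h
    exact h
  have htransvec (i j) (hij : i ≠ j) (a : K) :
      Matrix.SpecialLinearGroup.transvection hij a ∈ T := by
    show (toLin_equiv b (Matrix.SpecialLinearGroup.transvection hij a) : V ≃ₗ[K] V) ∈
      Subgroup.closure _
    rw [toLin_equiv_transvection]
    exact Subgroup.subset_closure (LinearEquiv.mem_transvections _)
  rcases subsingleton_or_nontrivial (Fin (finrank K V))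
  · rw [Subsingleton.elim ((toLin_equiv b).symm ⟨g, hg⟩) 1]
    exact one_mem _
  induction (toLin_equiv b).symm ⟨g, hg⟩ using diagonal_transvection_induction' with
  | hdiag i j hij hc =>
    rw [diag2n_eq_transvection_mul]
    repeat' apply mul_mem
    all_goals exact htransvec _ _ _ _
  | htransvec i j hij a => exact htransvec i j hij a
  | hmul A B hA hB => exact mul_mem hA hB

open LinearEquiv

/-- The group `S_W` of the statement: `SL(W)` acting on `V = W ⊕ K v` and fixing `v`. -/
def slFix (W : Submodule K V) (v : V) : Set (V ≃ₗ[K] V) :=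
  {g | LinearMap.det g.toLinearMap = 1 ∧ g v = v ∧ ∀ w ∈ W, g w ∈ W}

theorem transvection_mem_slFix {W : Submodule K V} {v u : V} {f : Dual K V} (hu : u ∈ W)
    (hfv : f v = 0) (hfu : f u = 0) : transvection hfu ∈ slFix W v :=
  ⟨by rw [← det_eq_one_iff, transvection.det_eq_one],
    by rw [transvection.apply, hfv, zero_smul, add_zero],
    fun w hw => by rw [transvection.apply]; exact add_mem hw (smul_mem _ _ hu)⟩

section Generation

variable {φ φ' : Dual K V} {v v' : V} {H : Subgroup (V ≃ₗ[K] V)}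

theorem transvection_mem_of_forall_transvection_mem (hφv : φ v = 1)
    (hS : slFix (LinearMap.ker φ) v ⊆ H) (hφ : ∀ w (hw : φ w = 0), transvection hw ∈ H)
    {f : Dual K V} {u : V} (hu : φ u = 0) (hfu : f u = 0) : transvection hfu ∈ H := by
  have h₁ : (f - f v • φ) u = 0 := by simp [hfu, hu]
  have h₂ : φ (f v • u) = 0 := by simp [hu]
  have : transvection hfu = transvection h₁ * transvection h₂ := by
    ext x
    simp only [LinearEquiv.mul_apply, transvection.coe_apply, LinearMap.transvection.apply,
      LinearMap.sub_apply, LinearMap.smul_apply, map_add, _root_.map_smul, hu, hfu, smul_eq_mul,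
      mul_zero]
    module
  rw [this]
  exact mul_mem (hS (transvection_mem_slFix hu (by simp [hφv]) h₁)) (hφ _ h₂)

theorem transvection_mem_of_transvection_mem_of_ne_zero (h3 : 3 ≤ finrank K V)
    (hφv : φ v = 1) (hS : slFix (LinearMap.ker φ) v ⊆ H) {w₀ : V} (hw₀ : φ w₀ = 0)
    (hw₀0 : w₀ ≠ 0) (hmem : transvection hw₀ ∈ H) {w : V} (hw : φ w = 0) :
    transvection hw ∈ H := by
  have hstep : ∀ u (hu : φ u = 0), u ∉ span K {w₀} → transvection hu ∈ H := by
    intro u hu hu₀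
    have hw₀vu : w₀ ∉ span K {v, u} := by
      intro h
      obtain ⟨a, b, rfl⟩ := mem_span_pair.1 h
      obtain rfl : a = 0 := by simpa [hφv, hu] using hw₀
      have hb : b ≠ 0 := by rintro rfl; simp at hw₀0
      exact hu₀ (mem_span_singleton.2 ⟨b⁻¹, by simp [smul_smul, hb]⟩)
    obtain ⟨f, hfw₀, hf⟩ := Dual.exists_apply_eq_of_notMem hw₀vu 1
    have hfu : f u = 0 := hf u (subset_span (by simp))
    have hg := hS (transvection_mem_slFix hu (hf v (subset_span (by simp))) hfu)
    -- conjugation by this element of `S_W` preserves `φ` and moves `w₀` to `w₀ + u`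
    have hconj := transvection.conj (transvection hfu) hw₀ (f' := φ) (u' := w₀ + u)
      (fun x => by simp [LinearMap.transvection.apply, hu])
      (by simp [LinearMap.transvection.apply, hfw₀])
    have : transvection (f := φ) (v := w₀ + u) (by simp [hw₀, hu]) ∈ H := by
      rw [← hconj]; exact mul_mem (mul_mem hg hmem) (inv_mem hg)
    rwa [← transvection.mul_of_left_eq hw₀ hu, Subgroup.mul_mem_cancel_left _ hmem] at this
  by_cases hw' : w ∈ span K {w₀}
  · have hle : ¬ LinearMap.ker φ ≤ span K {w₀} := fun hle =>
      Dual.not_ker_le_span_pair h3 (by simp [hφv] : φ v ≠ 0) w₀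
        (hle.trans (span_mono (by simp)))
    obtain ⟨u, hu, hu₀⟩ := Set.not_subset.1 hle
    have := hstep (w + u) (by simp [hw, LinearMap.mem_ker.1 hu])
      (fun h => hu₀ (by simpa using sub_mem h hw'))
    rwa [← transvection.mul_of_left_eq hw hu,
      Subgroup.mul_mem_cancel_right _ (hstep u hu hu₀)] at this
  · exact hstep w hw hw'

theorem exists_mem_apply_eq_zero (h3 : 3 ≤ finrank K V) (hφv : φ v = 1)
    (hS : slFix (LinearMap.ker φ) v ⊆ H) (hS' : slFix (LinearMap.ker φ') v' ⊆ H)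
    (hne : ¬ LinearMap.ker φ' ≤ LinearMap.ker φ) (hv' : v' ∉ span K {v}) :
    ∃ g ∈ H, φ (g v') = 0 := by
  obtain ⟨u₁, hu₁, hφu₁⟩ := Set.not_subset.1 hne
  replace hφu₁ : φ u₁ ≠ 0 := hφu₁
  have hφv0 : φ v ≠ 0 := by simp [hφv]
  obtain ⟨u₂, hu₂, hu₂₁, hu₂v⟩ := exists_mem_notMem_of_not_le
    (Dual.not_ker_le_span_pair h3 hφu₁ v') (Dual.not_ker_le_span_pair h3 hφv0 v')
  have hv'₂ : v' ∉ span K {v, u₂} := by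
    intro h
    rw [Set.pair_comm] at h
    exact hu₂v (Set.pair_comm v' v ▸ mem_span_insert_exchange h hv')
  -- `v' ↦ v' + u₂` by an element of `S_W`, then `+ t • u₁` by an element of `S_W'`
  obtain ⟨f₂, hf₂v', hf₂⟩ := Dual.exists_apply_eq_of_notMem hv'₂ 1
  obtain ⟨f₁, hf₁u₂, hf₁⟩ := Dual.exists_apply_eq_of_notMem hu₂₁ (-(φ v' / φ u₁))
  have hf₂u₂ : f₂ u₂ = 0 := hf₂ u₂ (subset_span (by simp))
  have hf₁u₁ : f₁ u₁ = 0 := hf₁ u₁ (subset_span (by simp))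
  have hf₁v' : f₁ v' = 0 := hf₁ v' (subset_span (by simp))
  refine ⟨transvection hf₁u₁ * transvection hf₂u₂,
    mul_mem (hS' (transvection_mem_slFix hu₁ hf₁v' hf₁u₁))
      (hS (transvection_mem_slFix hu₂ (hf₂ v (subset_span (by simp))) hf₂u₂)), ?_⟩
  simp only [LinearEquiv.mul_apply, transvection.coe_apply, LinearMap.transvection.apply, hf₂v',
    hf₁v', hf₁u₂, LinearMap.mem_ker.1 hu₂, one_smul, zero_add, map_add, _root_.map_smul,
    smul_eq_mul]
  field_simp
  ring

variable [FiniteDimensional K V]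

theorem exists_transvection_mem_of_apply_eq_zero (h3 : 3 ≤ finrank K V)
    (hS' : slFix (LinearMap.ker φ') v' ⊆ H) {g : V ≃ₗ[K] V} (hg : g ∈ H)
    (hgv' : φ (g v') = 0) : ∃ (w₀ : V) (hw₀ : φ w₀ = 0), w₀ ≠ 0 ∧ transvection hw₀ ∈ H := by
  obtain ⟨w₀, hw₀, hw₀0⟩ :=
    exists_mem_ne_zero_of_ne_bot (Dual.ker_inf_ker_ne_bot h3 φ (φ' ∘ₗ g.symm.toLinearMap))
  obtain ⟨hφw₀, hφ'w₀⟩ := mem_inf.1 hw₀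
  have hu₀ : (φ ∘ₗ g.toLinearMap) (g.symm w₀) = 0 := by simpa using hφw₀
  have hτ := hS' (transvection_mem_slFix (f := φ ∘ₗ g.toLinearMap) (u := g.symm w₀)
    hφ'w₀ hgv' hu₀)
  refine ⟨w₀, hφw₀, hw₀0, ?_⟩
  rw [← transvection.conj g hu₀ (fun x => rfl) (apply_symm_apply g w₀)]
  exact mul_mem (mul_mem hg hτ) (inv_mem hg)

theorem transvection_mem_of_apply_eq_zero (h3 : 3 ≤ finrank K V) (hφv : φ v = 1)
    (hS : slFix (LinearMap.ker φ) v ⊆ H) (hS' : slFix (LinearMap.ker φ') v' ⊆ H)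
    (hne : ¬ LinearMap.ker φ' ≤ LinearMap.ker φ) (hv' : v' ∉ span K {v})
    {f : Dual K V} {u : V} (hu : φ u = 0) (hfu : f u = 0) : transvection hfu ∈ H := by
  obtain ⟨g, hg, hgv'⟩ := exists_mem_apply_eq_zero h3 hφv hS hS' hne hv'
  obtain ⟨w₀, hw₀, hw₀0, hmem⟩ := exists_transvection_mem_of_apply_eq_zero h3 hS' hg hgv'
  exact transvection_mem_of_forall_transvection_mem hφv hS
    (fun w hw => transvection_mem_of_transvection_mem_of_ne_zero h3 hφv hS hw₀ hw₀0 hmem hw)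
    hu hfu

theorem transvections_subset_of_slFix_subset (h3 : 3 ≤ finrank K V) (hφv : φ v = 1)
    (hφ'v' : φ' v' = 1) (hS : slFix (LinearMap.ker φ) v ⊆ H)
    (hS' : slFix (LinearMap.ker φ') v' ⊆ H) (hne : LinearMap.ker φ ≠ LinearMap.ker φ')
    (hv : v ∉ span K {v'}) (hv' : v' ∉ span K {v}) : transvections K V ⊆ H := by
  have hφ : φ ≠ 0 := fun h => by simp [h] at hφv
  have hφ' : φ' ≠ 0 := fun h => by simp [h] at hφ'v'
  have hne₁ : ¬ LinearMap.ker φ' ≤ LinearMap.ker φ := fun h =>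
    hne (Dual.ker_eq_of_ker_le hφ' hφ h).symm
  have hne₂ : ¬ LinearMap.ker φ ≤ LinearMap.ker φ' := fun h =>
    hne (Dual.ker_eq_of_ker_le hφ hφ' h)
  have hT : ∀ {f : Dual K V} {u : V} (hu : φ u = 0) (hfu : f u = 0), transvection hfu ∈ H :=
    transvection_mem_of_apply_eq_zero h3 hφv hS hS' hne₁ hv'
  have hT' : ∀ {f : Dual K V} {u : V} (hu : φ' u = 0) (hfu : f u = 0), transvection hfu ∈ H :=
    transvection_mem_of_apply_eq_zero h3 hφ'v' hS' hS hne₂ hv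
  rintro _ ⟨f, u, hfu, rfl⟩
  by_cases hu : φ u = 0
  · exact hT hu hfu
  by_cases hu' : φ' u = 0
  · exact hT' hu' hfu
  -- move `u` into `ker φ` by a transvection along `ker φ'`, then conjugate back
  obtain ⟨u₁, hu₁, hφu₁⟩ := Set.not_subset.1 hne₁
  replace hφu₁ : φ u₁ ≠ 0 := hφu₁
  have hu₁u : u ∉ span K {u₁} := fun h => hu' ((span_singleton_le_iff_mem _ _).2 hu₁ h)
  obtain ⟨f₁, hf₁u, hf₁⟩ := Dual.exists_apply_eq_of_notMem hu₁u (-(φ u / φ u₁))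
  have hf₁u₁ : f₁ u₁ = 0 := hf₁ u₁ (mem_span_singleton_self u₁)
  have hg := hT' hu₁ hf₁u₁
  have hgu : φ (transvection hf₁u₁ u) = 0 := by
    rw [transvection.apply, map_add, _root_.map_smul, hf₁u, smul_eq_mul]
    field_simp
    ring
  have := hT (f := f ∘ₗ (transvection hf₁u₁).symm.toLinearMap) hgu
    (by rw [LinearMap.comp_apply, coe_coe, symm_apply_apply, hfu])
  rw [← transvection.conj _ hfu
    (fun x => by rw [LinearMap.comp_apply, coe_coe, symm_apply_apply]) rfl] at this
  exact (H.mul_mem_cancel_left hg).1 ((H.mul_mem_cancel_right (inv_mem hg)).1 this)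

end Generation

end

theorem stmt_6_general (V : Type*) [AddCommGroup V] [Module ℂ V] [FiniteDimensional ℂ V]
    (hdim : 3 ≤ Module.finrank ℂ V)
    (W W' : Submodule ℂ V) (hne : W ≠ W')
    (v v' : V) (hli : LinearIndependent ℂ ![v, v'])
    (hW : IsCompl W (Submodule.span ℂ {v})) (hW' : IsCompl W' (Submodule.span ℂ {v'})) :
    ∀ g : V ≃ₗ[ℂ] V,
      g ∈ Subgroup.closure
        ({g : V ≃ₗ[ℂ] V | LinearMap.det g.toLinearMap = 1 ∧ g v = v ∧ ∀ w ∈ W, g w ∈ W} ∪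
         {g : V ≃ₗ[ℂ] V | LinearMap.det g.toLinearMap = 1 ∧ g v' = v' ∧ ∀ w ∈ W', g w ∈ W'}) ↔
      LinearMap.det g.toLinearMap = 1 := by
  intro g
  obtain ⟨φ, rfl, hφv⟩ := Dual.exists_ker_eq_of_isCompl (hli.ne_zero 0) hW
  obtain ⟨φ', rfl, hφ'v'⟩ := Dual.exists_ker_eq_of_isCompl (by simpa using hli.ne_zero 1) hW'
  rw [← LinearEquiv.det_eq_one_iff]
  constructor
  · refine fun hg => (Subgroup.closure_le LinearEquiv.det.ker).2 ?_ hg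
    rintro e (⟨he, -, -⟩ | ⟨he, -, -⟩) <;> exact LinearEquiv.det_eq_one_iff.2 he
  · intro hg
    refine (Subgroup.closure_le _).2 ?_ (LinearEquiv.mem_closure_transvections_of_det_eq_one hg)
    exact transvections_subset_of_slFix_subset hdim hφv hφ'v'
      (Set.subset_union_left.trans Subgroup.subset_closure)
      (Set.subset_union_right.trans Subgroup.subset_closure) hne
      hli.notMem_span_singleton_of_pair
      (LinearIndependent.pair_symm_iff.1 hli).notMem_span_singleton_of_pair

/-- Let `V` be a complex vector space of dimension `≥ 3`, `W ≠ W'` two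
codimension-one subspaces, `v, v'` linearly independent vectors with `V = W ⊕ ℂv` and
`V = W' ⊕ ℂv'`. Then the subgroup of `GL(V)` generated by the copies of `SL(W)` and `SL(W')`
(determinant-one automorphisms fixing `v`, resp. `v'`, and stabilising `W`, resp. `W'`)
is the full special linear group `SL(V)`. -/
theorem stmt_6 (V : Type*) [AddCommGroup V] [Module ℂ V] [FiniteDimensional ℂ V]
    (hdim : 3 ≤ Module.finrank ℂ V)
    (W W' : Submodule ℂ V) (hne : W ≠ W')
    (hWcodim : Module.finrank ℂ W = Module.finrank ℂ V - 1)
    (hW'codim : Module.finrank ℂ W' = Module.finrank ℂ V - 1)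
    (v v' : V) (hli : LinearIndependent ℂ ![v, v'])
    (hW : IsCompl W (Submodule.span ℂ {v})) (hW' : IsCompl W' (Submodule.span ℂ {v'})) :
    ∀ g : V ≃ₗ[ℂ] V,
      g ∈ Subgroup.closure
        ({g : V ≃ₗ[ℂ] V | LinearMap.det g.toLinearMap = 1 ∧ g v = v ∧ ∀ w ∈ W, g w ∈ W} ∪
         {g : V ≃ₗ[ℂ] V | LinearMap.det g.toLinearMap = 1 ∧ g v' = v' ∧ ∀ w ∈ W', g w ∈ W'}) ↔
      LinearMap.det g.toLinearMap = 1 :=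
  stmt_6_general V hdim W W' hne v v' hli hW hW'
end

section
/- Let K be a field, n ≥ 1, and x_1, …, x_{n+1} ∈ K with x_i ≠ 0 and x_i ≠ 1 for all i. Then the determinant of the n×n matrix h(x_1, …, x_{n+1}) equals (1 − x_1 x_2 ⋯ x_{n+1}) / ((1 − x_1)(1 − x_2)⋯(1 − x_{n+1})). In particular, h(x_1, …, x_{n+1}) is invertible if and only if x_1 x_2 ⋯ x_{n+1} ≠ 1. -/
/-!
Substituting `y i = (1 - x i)⁻¹`, the matrix `h` becomes tridiagonal with diagonal
`y j + y (j + 1) - 1` and off-diagonal entries `-y (j + 1)` and `1 - y (j + 1)`. The three-term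
recurrence for determinants of tridiagonal matrices then gives `det h = ∏ y i - ∏ (y i - 1)` by
induction, and since `y i - 1 = x i / (1 - x i)` this is `(1 - ∏ x i) / ∏ (1 - x i)`.
-/

/-- The `n × n` matrix of the skew-hermitian form preserved by the reduced Gassner
representation of the pure braid group, specialised at `X_i ↦ x i` (indices `0`-based):
`h j j = (1 - x_j x_{j+1}) / ((1 - x_j)(1 - x_{j+1}))`, `h j (j+1) = -1 / (1 - x_{j+1})`,
`h (j+1) j = -x_{j+1} / (1 - x_{j+1})` and `h j k = 0` for `|j - k| ≥ 2`. -/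
def gassnerForm {K : Type*} [Field K] {n : ℕ} (x : Fin (n + 1) → K) :
    Matrix (Fin n) (Fin n) K := fun j k =>
  if (j : ℕ) = (k : ℕ) then
    (1 - x j.castSucc * x j.succ) / ((1 - x j.castSucc) * (1 - x j.succ))
  else if (j : ℕ) + 1 = (k : ℕ) then -1 / (1 - x k.castSucc)
  else if (k : ℕ) + 1 = (j : ℕ) then -(x j.castSucc) / (1 - x j.castSucc)
  else 0

open Finset

namespace Matrix

variable {R : Type*} [CommRing R]

def tridiagonal (a b c : ℕ → R) (n : ℕ) : Matrix (Fin n) (Fin n) R :=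
  of fun i j =>
    if (i : ℕ) = j then a i
    else if (i : ℕ) + 1 = j then b i
    else if (j : ℕ) + 1 = i then c j
    else 0

variable (a b c : ℕ → R)

lemma tridiagonal_apply_self {n : ℕ} (i : Fin n) : tridiagonal a b c n i i = a i := by
  simp [tridiagonal]

lemma tridiagonal_apply_of_succ_eq {n : ℕ} {i j : Fin n} (h : (i : ℕ) + 1 = j) :
    tridiagonal a b c n i j = b i := by
  rw [tridiagonal, of_apply, if_neg (by omega), if_pos h]

lemma tridiagonal_apply_of_eq_succ {n : ℕ} {i j : Fin n} (h : (i : ℕ) = j + 1) :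
    tridiagonal a b c n i j = c j := by
  rw [tridiagonal, of_apply, if_neg (by omega), if_neg (by omega), if_pos h.symm]

lemma tridiagonal_apply_eq_zero {n : ℕ} {i j : Fin n} (h : (i : ℕ) + 1 < j ∨ (j : ℕ) + 1 < i) :
    tridiagonal a b c n i j = 0 := by
  rw [tridiagonal, of_apply, if_neg (by omega), if_neg (by omega), if_neg (by omega)]

lemma tridiagonal_submatrix_castSucc (n : ℕ) :
    (tridiagonal a b c (n + 1)).submatrix Fin.castSucc Fin.castSucc = tridiagonal a b c n := by
  ext i j
  simp [tridiagonal]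

lemma det_tridiagonal_succ_succ (n : ℕ) :
    (tridiagonal a b c (n + 2)).det =
      a (n + 1) * (tridiagonal a b c (n + 1)).det - b n * c n * (tridiagonal a b c n).det := by
  -- Expand along the last row; the minor at column `n` has `b n` as the only nonzero entry of its
  -- last column.
  have hrow : (tridiagonal a b c (n + 2)).det =
      -(c n * ((tridiagonal a b c (n + 2)).submatrix Fin.castSucc
        (Fin.last n).castSucc.succAbove).det) + a (n + 1) * (tridiagonal a b c (n + 1)).det := by
    rw [det_succ_row _ (Fin.last (n + 1)),
      Fintype.sum_eq_add _ _ (Fin.castSucc_lt_last (Fin.last n)).ne]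
    · rw [tridiagonal_apply_of_eq_succ _ _ _ (by simp), tridiagonal_apply_self, Fin.succAbove_last,
        tridiagonal_submatrix_castSucc]
      simp only [Fin.val_last, Fin.val_castSucc, Odd.neg_one_pow (⟨n, by ring⟩ : Odd (n + 1 + n)),
        Even.neg_one_pow (⟨n + 1, rfl⟩ : Even (n + 1 + (n + 1)))]
      ring
    · rintro j ⟨hj, hj'⟩
      rw [tridiagonal_apply_eq_zero, mul_zero, zero_mul]
      right
      have hjn := Fin.val_ne_of_ne hj
      have hjl := Fin.val_ne_of_ne hj'
      simp only [Fin.val_last, Fin.val_castSucc] at hjn hjl ⊢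
      omega
  have hcol : ((tridiagonal a b c (n + 2)).submatrix Fin.castSucc
        (Fin.last n).castSucc.succAbove).det = b n * (tridiagonal a b c n).det := by
    rw [det_succ_column _ (Fin.last n), Fintype.sum_eq_single (Fin.last n)]
    · have hcols : (Fin.last n).castSucc.succAbove ∘ Fin.castSucc =
          (Fin.castSucc ∘ Fin.castSucc : Fin n → Fin (n + 2)) :=
        funext fun i => Fin.succAbove_castSucc_of_lt _ _ (Fin.castSucc_lt_last i)
      rw [submatrix_apply, submatrix_submatrix, Fin.succAbove_last, hcols, ← submatrix_submatrix,
        tridiagonal_submatrix_castSucc, tridiagonal_submatrix_castSucc,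
        Fin.succAbove_castSucc_self, Fin.succ_last, tridiagonal_apply_of_succ_eq _ _ _ (by simp)]
      simp only [Fin.val_last, Fin.val_castSucc, Even.neg_one_pow (⟨n, rfl⟩ : Even (n + n))]
      ring
    · intro i hi
      rw [submatrix_apply, Fin.succAbove_castSucc_self, Fin.succ_last, tridiagonal_apply_eq_zero,
        mul_zero, zero_mul]
      left
      have := Fin.val_ne_of_ne hi
      simp only [Fin.val_last, Fin.val_castSucc] at this ⊢
      omega
  rw [hrow, hcol]
  ring

lemma det_tridiagonal_eq_prod_sub_prod (y : ℕ → R) (n : ℕ) :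
    (tridiagonal (fun k => y k + y (k + 1) - 1) (fun k => -y (k + 1)) (fun k => 1 - y (k + 1))
      n).det = ∏ k ∈ range (n + 1), y k - ∏ k ∈ range (n + 1), (y k - 1) := by
  induction n using Nat.twoStepInduction with
  | zero => simp
  | one =>
    rw [det_fin_one, tridiagonal_apply_self]
    simp only [Fin.val_zero, prod_range_succ, range_one, prod_singleton]
    ring
  | more n ih ih' =>
    rw [det_tridiagonal_succ_succ, ih, ih', prod_range_succ _ (n + 2), prod_range_succ _ (n + 2),
      prod_range_succ _ (n + 1), prod_range_succ _ (n + 1)]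
    ring

end Matrix

lemma prod_inv_one_sub_sub_prod {ι K : Type*} [Fintype ι] [Field K] (x : ι → K)
    (hx : ∀ i, x i ≠ 1) :
    ∏ i, (1 - x i)⁻¹ - ∏ i, ((1 - x i)⁻¹ - 1) = (1 - ∏ i, x i) / ∏ i, (1 - x i) := by
  have hsub : ∀ i, (1 - x i)⁻¹ - 1 = x i / (1 - x i) := fun i => by
    field_simp [sub_ne_zero.2 (hx i).symm]
    ring
  simp_rw [hsub, prod_div_distrib, prod_inv_distrib]
  field_simp

open Matrix in
lemma gassnerForm_eq_tridiagonal {K : Type*} [Field K] {n : ℕ} (x : Fin (n + 1) → K)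
    (hx : ∀ i, x i ≠ 1) (y : ℕ → K) (hy : ∀ i : Fin (n + 1), y i = (1 - x i)⁻¹) :
    gassnerForm x = tridiagonal (fun k => y k + y (k + 1) - 1) (fun k => -y (k + 1))
      (fun k => 1 - y (k + 1)) n := by
  have hx' : ∀ i, 1 - x i ≠ 0 := fun i => sub_ne_zero.2 (hx i).symm
  have hcast : ∀ i : Fin n, y i = (1 - x i.castSucc)⁻¹ := fun i => hy i.castSucc
  ext i j
  simp only [gassnerForm, tridiagonal, of_apply]
  split_ifs with h1 h2 h3
  · obtain rfl := Fin.ext h1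
    rw [hcast, ← Fin.val_succ, hy]
    field_simp [hx']
    ring
  · rw [h2, hcast, neg_div, one_div]
  · rw [h3, hcast]
    field_simp [hx']
    ring
  · rfl

lemma det_gassnerForm {K : Type*} [Field K] {n : ℕ} (x : Fin (n + 1) → K) (hx : ∀ i, x i ≠ 1) :
    (gassnerForm x).det = (1 - ∏ i, x i) / ∏ i, (1 - x i) := by
  set y : ℕ → K := fun k => if hk : k < n + 1 then (1 - x ⟨k, hk⟩)⁻¹ else 0
  have hy : ∀ i : Fin (n + 1), y i = (1 - x i)⁻¹ := fun i => dif_pos i.isLt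
  rw [gassnerForm_eq_tridiagonal x hx y hy, Matrix.det_tridiagonal_eq_prod_sub_prod,
    ← Fin.prod_univ_eq_prod_range, ← Fin.prod_univ_eq_prod_range (fun k => y k - 1)]
  simp only [hy]
  exact prod_inv_one_sub_sub_prod x hx

theorem stmt_10_general (K : Type*) [Field K] (n : ℕ)
    (x : Fin (n + 1) → K) (h1 : ∀ i, x i ≠ 1) :
    (gassnerForm x).det = (1 - ∏ i, x i) / ∏ i, (1 - x i) ∧
    (IsUnit (gassnerForm x) ↔ ∏ i, x i ≠ 1) := by
  have hprod : ∏ i, (1 - x i) ≠ 0 := prod_ne_zero_iff.2 fun i _ => sub_ne_zero.2 (h1 i).symm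
  refine ⟨det_gassnerForm x h1, ?_⟩
  rw [Matrix.isUnit_iff_isUnit_det, isUnit_iff_ne_zero, det_gassnerForm x h1, div_ne_zero_iff,
    sub_ne_zero, ne_comm]
  exact and_iff_left hprod

/-- The determinant of the Gassner form matrix is
`(1 - x₁ ⋯ x_{n+1}) / ((1 - x₁) ⋯ (1 - x_{n+1}))`; in particular the matrix is invertible
if and only if `x₁ x₂ ⋯ x_{n+1} ≠ 1`. -/
theorem stmt_10 (K : Type*) [Field K] (n : ℕ) (hn : 1 ≤ n)
    (x : Fin (n + 1) → K) (h0 : ∀ i, x i ≠ 0) (h1 : ∀ i, x i ≠ 1) :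
    (gassnerForm x).det = (1 - ∏ i, x i) / ∏ i, (1 - x i) ∧
    (IsUnit (gassnerForm x) ↔ ∏ i, x i ≠ 1) :=
  stmt_10_general K n x h1
end

section
/- Let K be a field, n ≥ 1, x_1, …, x_{n+1} ∈ K with x_i ≠ 0 and x_i ≠ 1 for all i, and let σ be a field automorphism of K with σ(x_i) = x_i^{−1} for all i. Then the matrix h = h(x_1, …, x_{n+1}) is skew-hermitian with respect to σ: σ(h_{jk}) = −h_{kj} for all 1 ≤ j, k ≤ n, i.e., applying σ entrywise to the transpose of h yields −h. -/
/-!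
In terms of `u i = (1 - x i)⁻¹` the entries of `h` are `h j j = u j + u (j+1) - 1`,
`h j (j+1) = -u (j+1)` and `h (j+1) j = 1 - u (j+1)`. If `σ (x i) = (x i)⁻¹` then
`σ (u i) = 1 - u i`, and skew-hermitianity becomes a one-line check on each diagonal.
-/

section Field

variable {K : Type*} [Field K]

theorem map_inv_one_sub_of_map_eq_inv {F : Type*} [FunLike F K K] [RingHomClass F K K]
    (σ : F) {a : K} (ha0 : a ≠ 0) (ha1 : a ≠ 1) (hσ : σ a = a⁻¹) :
    σ (1 - a)⁻¹ = 1 - (1 - a)⁻¹ := by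
  have h : 1 - a ≠ 0 := sub_ne_zero.mpr ha1.symm
  rw [map_inv₀, map_sub, map_one, hσ]
  field_simp
  ring

theorem one_sub_mul_div_one_sub_mul_one_sub {a b : K} (ha : a ≠ 1) (hb : b ≠ 1) :
    (1 - a * b) / ((1 - a) * (1 - b)) = (1 - a)⁻¹ + (1 - b)⁻¹ - 1 := by
  have ha' : 1 - a ≠ 0 := sub_ne_zero.mpr ha.symm
  have hb' : 1 - b ≠ 0 := sub_ne_zero.mpr hb.symm
  field_simp
  ring

theorem neg_div_one_sub_self {a : K} (ha : a ≠ 1) : -a / (1 - a) = 1 - (1 - a)⁻¹ := by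
  have ha' : 1 - a ≠ 0 := sub_ne_zero.mpr ha.symm
  field_simp
  ring

end Field

theorem gassnerForm_apply {K : Type*} [Field K] {n : ℕ} {x : Fin (n + 1) → K}
    (h1 : ∀ i, x i ≠ 1) (j k : Fin n) :
    gassnerForm x j k =
      if (j : ℕ) = k then (1 - x j.castSucc)⁻¹ + (1 - x j.succ)⁻¹ - 1
      else if (j : ℕ) + 1 = k then -(1 - x k.castSucc)⁻¹
      else if (k : ℕ) + 1 = j then 1 - (1 - x j.castSucc)⁻¹
      else 0 := by
  rw [gassnerForm, one_sub_mul_div_one_sub_mul_one_sub (h1 _) (h1 _),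
    neg_div_one_sub_self (h1 _), neg_div, one_div]

theorem stmt_11_general (K : Type*) [Field K] (n : ℕ)
    (x : Fin (n + 1) → K) (h0 : ∀ i, x i ≠ 0) (h1 : ∀ i, x i ≠ 1)
    (σ : K ≃+* K) (hσx : ∀ i, σ (x i) = (x i)⁻¹) :
    ∀ j k : Fin n, σ (gassnerForm x j k) = -gassnerForm x k j := by
  have hσu i : σ (1 - x i)⁻¹ = 1 - (1 - x i)⁻¹ :=
    map_inv_one_sub_of_map_eq_inv σ (h0 i) (h1 i) (hσx i)
  intro j k
  rw [gassnerForm_apply h1, gassnerForm_apply h1]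
  split_ifs <;> try omega
  · obtain rfl : j = k := Fin.ext ‹_›
    rw [map_sub, map_add, hσu, hσu, map_one]
    ring
  all_goals simp [hσu]

/-- If `σ` is a field automorphism of `K` with `σ (x i) = (x i)⁻¹` for all
`i`, then the Gassner form matrix is skew-hermitian with respect to `σ`:
`σ (h j k) = -h k j` for all `j, k`. -/
theorem stmt_11 (K : Type*) [Field K] (n : ℕ) (hn : 1 ≤ n)
    (x : Fin (n + 1) → K) (h0 : ∀ i, x i ≠ 0) (h1 : ∀ i, x i ≠ 1)
    (σ : K ≃+* K) (hσx : ∀ i, σ (x i) = (x i)⁻¹) :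
    ∀ j k : Fin n, σ (gassnerForm x j k) = -gassnerForm x k j :=
  stmt_11_general K n x h0 h1 σ hσx
end

section
/- Let K be a field, n ≥ 1, x_1, …, x_{n+1} ∈ K with x_i ≠ 0 and x_i ≠ 1 for all i, and let σ be a field automorphism of K with σ(x_i) = x_i^{−1} for all i. Let T_1, …, T_n be the specialized reduced Gassner matrices and h = h(x_1, …, x_{n+1}). Then each T_i preserves the sesquilinear form defined by h: writing h(v, w) = Σ_{j,k} σ(v_j) h_{jk} w_k for v, w ∈ K^n, one has h(T_i v, T_i w) = h(v, w) for all v, w ∈ K^n and all 1 ≤ i ≤ n; equivalently, as a matrix identity, (σ applied entrywise to the transpose of T_i) · h · T_i = h. -/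
/-- `T` is the family of specialized reduced Gassner matrices for the parameters `x`:
on the standard basis (`0`-based indices), `T i ε_{i-1} = ε_{i-1} + x_i (1 - x_{i+1}) ε_i`,
`T i ε_i = x_i x_{i+1} ε_i`, `T i ε_{i+1} = (1 - x_i) ε_i + ε_{i+1}`, and `T i ε_j = ε_j`
for `|i - j| ≥ 2`. -/
def IsGassnerMatrices {K : Type*} [Field K] {n : ℕ} (x : Fin (n + 1) → K)
    (T : Fin n → Matrix (Fin n) (Fin n) K) : Prop :=
  ∀ i k : Fin n,
    (T i).mulVec (Pi.single k 1) =
      if k = i then (x i.castSucc * x i.succ) • (Pi.single i 1 : Fin n → K)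
      else if (k : ℕ) + 1 = (i : ℕ) then
        (Pi.single k 1 : Fin n → K) + (x i.castSucc * (1 - x i.succ)) • (Pi.single i 1 : Fin n → K)
      else if (k : ℕ) = (i : ℕ) + 1 then
        (1 - x i.castSucc) • (Pi.single i 1 : Fin n → K) + (Pi.single k 1 : Fin n → K)
      else (Pi.single k 1 : Fin n → K)

/-!
Each `T i` differs from the identity only in its `i`-th row: `T i = 1 + e_i rᵀ`. Hence
`(σ (T i))ᵀ h (T i) = h + σ(r) h_{i,·} + h_{·,i} rᵀ + h_{ii} σ(r) rᵀ`. The row `r` is a multiple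
`d • h_{i,·}` of the `i`-th row of `h`, and, because `σ` inverts the parameters, `σ(r)` is a
multiple `c • h_{·,i}` of its `i`-th column. The correction is therefore
`(c + d + c d h_{ii}) h_{·,i} h_{i,·}`, and with `a = x_i`, `b = x_{i+1}`,
`c = (1 - a)(1 - b)/(ab)`, `d = -(1 - a)(1 - b)` the scalar `c + d + c d h_{ii}` vanishes.
-/

open Matrix

section Sesquilinear

variable {R ι F : Type*} [CommSemiring R] [Fintype ι] [FunLike F R R] [RingHomClass F R R]

theorem sum_sum_mul_mulVec_eq_dotProduct (h : Matrix ι ι R) (v w : ι → R) :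
    ∑ j, ∑ k, v j * h j k * w k = v ⬝ᵥ (h *ᵥ w) := by
  simp only [dotProduct, mulVec, Finset.mul_sum, mul_assoc]

theorem sum_sum_map_mulVec_mul_mulVec (σ : F) (h A : Matrix ι ι R) (v w : ι → R) :
    ∑ j, ∑ k, σ ((A *ᵥ v) j) * h j k * (A *ᵥ w) k =
      ∑ j, ∑ k, σ (v j) * (Aᵀ.map σ * h * A) j k * w k := by
  have hσA : (fun j => σ ((A *ᵥ v) j)) = A.map σ *ᵥ (σ ∘ v) :=
    funext ((σ : R →+* R).map_mulVec A v)
  rw [sum_sum_mul_mulVec_eq_dotProduct, sum_sum_mul_mulVec_eq_dotProduct (v := fun j => σ (v j)),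
    hσA, mulVec_mulVec, transpose_map, mul_assoc, ← mulVec_mulVec _ _ (h * A), mulVec_transpose,
    dotProduct_comm, dotProduct_mulVec]
  exact dotProduct_comm _ _

end Sesquilinear

theorem map_transpose_mul_mul_one_add_vecMulVec_single {R ι F : Type*} [CommRing R] [Fintype ι]
    [DecidableEq ι] [FunLike F R R] [RingHomClass F R R] (σ : F) (h : Matrix ι ι R) (i : ι)
    (r : ι → R) (c d : R) (hσr : ∀ l, σ (r l) = c * h l i) (hr : ∀ m, r m = d * h i m)
    (hcd : c + d + c * d * h i i = 0) :
    (1 + vecMulVec (Pi.single i 1) r)ᵀ.map σ * h * (1 + vecMulVec (Pi.single i 1) r) = h := by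
  ext l m
  simp only [transpose_add, transpose_one, transpose_vecMulVec, mul_apply, map_apply,
    Matrix.add_apply, one_apply, vecMulVec_apply, Pi.single_apply, mul_ite, mul_one, mul_zero,
    map_add, apply_ite σ, map_one, map_zero, add_mul, ite_mul, one_mul, zero_mul,
    Finset.sum_add_distrib, Finset.sum_ite_eq, Finset.sum_ite_eq', Finset.mem_univ, if_true,
    mul_add]
  rw [hσr, hr]
  linear_combination (h l i * h i m) * hcd

section Gassner

variable {K F : Type*} [Field K] [FunLike F K K] [RingHomClass F K K] {n : ℕ}

def gassnerRow (x : Fin (n + 1) → K) (i : Fin n) : Fin n → K := fun k =>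
  if k = i then x i.castSucc * x i.succ - 1
  else if (k : ℕ) + 1 = i then x i.castSucc * (1 - x i.succ)
  else if (k : ℕ) = i + 1 then 1 - x i.castSucc
  else 0

variable {x : Fin (n + 1) → K}

theorem IsGassnerMatrices.eq_one_add_vecMulVec {T : Fin n → Matrix (Fin n) (Fin n) K}
    (hT : IsGassnerMatrices x T) (i : Fin n) :
    T i = 1 + vecMulVec (Pi.single i 1) (gassnerRow x i) := by
  refine ext_of_mulVec_single fun k => ?_
  rw [hT, add_mulVec, one_mulVec, vecMulVec_mulVec, dotProduct_single, mul_one, op_smul_eq_smul]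
  unfold gassnerRow
  split_ifs with hki
  · subst hki
    module
  · rfl
  · exact add_comm _ _
  · rw [zero_smul, add_zero]

theorem gassnerForm_apply_left (i m : Fin n) :
    gassnerForm x i m =
      if m = i then (1 - x i.castSucc * x i.succ) / ((1 - x i.castSucc) * (1 - x i.succ))
      else if (m : ℕ) + 1 = i then -x i.castSucc / (1 - x i.castSucc)
      else if (m : ℕ) = i + 1 then -1 / (1 - x i.succ)
      else 0 := by
  unfold gassnerForm
  simp only [Fin.ext_iff]
  split_ifs <;> first | omega | rfl | skip
  rw [show m.castSucc = i.succ from Fin.ext (by assumption)]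

theorem gassnerForm_apply_right (i l : Fin n) :
    gassnerForm x l i =
      if l = i then (1 - x i.castSucc * x i.succ) / ((1 - x i.castSucc) * (1 - x i.succ))
      else if (l : ℕ) + 1 = i then -1 / (1 - x i.castSucc)
      else if (l : ℕ) = i + 1 then -x i.succ / (1 - x i.succ)
      else 0 := by
  unfold gassnerForm
  simp only [Fin.ext_iff]
  split_ifs <;> first | omega | rfl | skip
  · rw [Fin.ext (by assumption : (l : ℕ) = i)]
  · rw [show l.castSucc = i.succ from Fin.ext (by assumption)]

theorem gassnerRow_eq_mul_gassnerForm (hx1 : ∀ i, x i ≠ 1) (i m : Fin n) :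
    gassnerRow x i m = -((1 - x i.castSucc) * (1 - x i.succ)) * gassnerForm x i m := by
  have ha := sub_ne_zero.2 (hx1 i.castSucc).symm
  have hb := sub_ne_zero.2 (hx1 i.succ).symm
  rw [gassnerForm_apply_left]
  unfold gassnerRow
  split_ifs <;> field_simp <;> ring

theorem map_gassnerRow (σ : F) (hx0 : ∀ i, x i ≠ 0) (hx1 : ∀ i, x i ≠ 1)
    (hσ : ∀ i, σ (x i) = (x i)⁻¹) (i l : Fin n) :
    σ (gassnerRow x i l) =
      (1 - x i.castSucc) * (1 - x i.succ) / (x i.castSucc * x i.succ) * gassnerForm x l i := by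
  have ha := sub_ne_zero.2 (hx1 i.castSucc).symm
  have hb := sub_ne_zero.2 (hx1 i.succ).symm
  have ha0 := hx0 i.castSucc
  have hb0 := hx0 i.succ
  rw [gassnerForm_apply_right]
  unfold gassnerRow
  split_ifs <;> simp only [map_sub, map_mul, map_one, map_zero, hσ] <;> field_simp <;> ring

theorem IsGassnerMatrices.map_transpose_mul_gassnerForm_mul
    {T : Fin n → Matrix (Fin n) (Fin n) K} (hT : IsGassnerMatrices x T) (σ : F)
    (hx0 : ∀ i, x i ≠ 0) (hx1 : ∀ i, x i ≠ 1) (hσ : ∀ i, σ (x i) = (x i)⁻¹) (i : Fin n) :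
    (T i)ᵀ.map σ * gassnerForm x * T i = gassnerForm x := by
  rw [hT.eq_one_add_vecMulVec]
  refine map_transpose_mul_mul_one_add_vecMulVec_single σ _ i _ _ _
    (map_gassnerRow σ hx0 hx1 hσ i) (gassnerRow_eq_mul_gassnerForm hx1 i) ?_
  have ha := sub_ne_zero.2 (hx1 i.castSucc).symm
  have hb := sub_ne_zero.2 (hx1 i.succ).symm
  have ha0 := hx0 i.castSucc
  have hb0 := hx0 i.succ
  rw [gassnerForm_apply_left, if_pos rfl]
  field_simp
  ring

end Gassner

theorem stmt_12_general (K : Type*) [Field K] (n : ℕ)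
    (x : Fin (n + 1) → K) (h0 : ∀ i, x i ≠ 0) (h1 : ∀ i, x i ≠ 1)
    (σ : K ≃+* K) (hσx : ∀ i, σ (x i) = (x i)⁻¹)
    (T : Fin n → Matrix (Fin n) (Fin n) K) (hT : IsGassnerMatrices x T) :
    (∀ i : Fin n, ∀ v w : Fin n → K,
      (∑ j, ∑ k, σ (((T i).mulVec v) j) * gassnerForm x j k * ((T i).mulVec w) k) =
        ∑ j, ∑ k, σ (v j) * gassnerForm x j k * w k) ∧
    (∀ i : Fin n, ((T i).transpose.map ⇑σ) * gassnerForm x * T i = gassnerForm x) := by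
  have hinv : ∀ i, (T i)ᵀ.map σ * gassnerForm x * T i = gassnerForm x :=
    hT.map_transpose_mul_gassnerForm_mul σ h0 h1 hσx
  refine ⟨fun i v w => ?_, hinv⟩
  rw [sum_sum_map_mulVec_mul_mulVec σ, hinv i]

/-- If `σ` is a field automorphism of `K` with `σ (x i) = (x i)⁻¹`, then
the specialized reduced Gassner matrices preserve the sesquilinear form attached to the
Gassner form matrix `h`: `h (T i v) (T i w) = h (v) (w)` for all `v, w`; equivalently, as a
matrix identity, `(σ ∘ Tᵢᵀ) ⬝ h ⬝ Tᵢ = h`. -/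
theorem stmt_12 (K : Type*) [Field K] (n : ℕ) (hn : 1 ≤ n)
    (x : Fin (n + 1) → K) (h0 : ∀ i, x i ≠ 0) (h1 : ∀ i, x i ≠ 1)
    (σ : K ≃+* K) (hσx : ∀ i, σ (x i) = (x i)⁻¹)
    (T : Fin n → Matrix (Fin n) (Fin n) K) (hT : IsGassnerMatrices x T) :
    (∀ i : Fin n, ∀ v w : Fin n → K,
      (∑ j, ∑ k, σ (((T i).mulVec v) j) * gassnerForm x j k * ((T i).mulVec w) k) =
        ∑ j, ∑ k, σ (v j) * gassnerForm x j k * w k) ∧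
    (∀ i : Fin n, ((T i).transpose.map ⇑σ) * gassnerForm x * T i = gassnerForm x) :=
  stmt_12_general K n x h0 h1 σ hσx T hT
end

section
/- Let K be a field, n ≥ 2, and x_1, …, x_{n+1} ∈ K with x_i ≠ 0 and x_i ≠ 1 for all i, and let T_1, …, T_n be the specialized reduced Gassner matrices acting on K^n. Then the action of the group generated by T_1, …, T_n on K^n is irreducible (i.e., the only K-subspaces of K^n invariant under every T_i are 0 and K^n) if and only if x_1 x_2 ⋯ x_{n+1} ≠ 1. -/
open Matrix

theorem Fin.forall_of_iff_succ {n : ℕ} {P : Fin n → Prop}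
    (h : ∀ j (hj : j + 1 < n), P ⟨j, by omega⟩ ↔ P ⟨j + 1, hj⟩) (i₀ : Fin n) (hi₀ : P i₀)
    (i : Fin n) : P i := by
  have hP : ∀ j (hj : j < n), P ⟨j, hj⟩ ↔ P ⟨0, by omega⟩ := by
    intro j
    induction j with
    | zero => exact fun _ => Iff.rfl
    | succ j ih => exact fun hj => (h j hj).symm.trans (ih (by omega))
  exact (hP i i.isLt).mpr ((hP i₀ i₀.isLt).mp hi₀)

theorem Submodule.eq_top_of_forall_single_mem {K m : Type*} [Field K] [Fintype m] [DecidableEq m]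
    {U : Submodule K (m → K)} (hU : ∀ j, Pi.single j 1 ∈ U) : U = ⊤ := by
  rw [eq_top_iff, ← (Pi.basisFun K m).span_eq, Submodule.span_le]
  rintro _ ⟨j, rfl⟩
  simpa using hU j

theorem Matrix.exists_invariant_ne_bot_ne_top_of_mulVec_eq_self {K ι m : Type*} [Field K]
    [Fintype m] [DecidableEq m] (T : ι → Matrix m m K) (hm : 2 ≤ Fintype.card m) {w : m → K}
    (hw : w ≠ 0) (hfix : ∀ i, T i *ᵥ w = w) :
    ∃ U : Submodule K (m → K), (∀ i, ∀ v ∈ U, T i *ᵥ v ∈ U) ∧ U ≠ ⊥ ∧ U ≠ ⊤ := by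
  refine ⟨K ∙ w, fun i v hv => ?_, by simpa using hw, fun htop => ?_⟩
  · obtain ⟨a, rfl⟩ := Submodule.mem_span_singleton.mp hv
    rw [mulVec_smul, hfix]
    exact Submodule.smul_mem _ a (Submodule.mem_span_singleton_self w)
  · have h := finrank_span_singleton (K := K) hw
    rw [htop, finrank_top, Module.finrank_fintype_fun_eq_card] at h
    omega

namespace Gassner

variable {K : Type*} [Field K]

-- The coefficient of `ε_m` in `T_m V - V`, in the paper's 1-based indexing (for `m ≥ 1`).
def coeff (X V : ℕ → K) (m : ℕ) : K :=
  (X m * X (m + 1) - 1) * V m + (1 - X m) * V (m + 1) + X m * (1 - X (m + 1)) * V (m - 1)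

def partialProd (X : ℕ → K) (m : ℕ) : K := ∏ j ∈ Finset.range m, X (j + 1)

lemma coeff_one_sub_partialProd (X : ℕ → K) (k : ℕ) :
    coeff X (fun m => 1 - partialProd X m) (k + 1) = 0 := by
  simp only [coeff, partialProd, Finset.prod_range_succ, Nat.add_sub_cancel]
  ring

lemma coeff_congr {X V V' : ℕ → K} {k : ℕ} (h : ∀ m ≤ k + 2, V m = V' m) :
    coeff X V (k + 1) = coeff X V' (k + 1) := by
  simp only [coeff, Nat.add_sub_cancel, h k (by omega), h (k + 1) (by omega),
    h (k + 1 + 1) (by omega)]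

theorem eq_zero_of_coeff_eq_zero {X V : ℕ → K} {N : ℕ} (hX : ∀ m, 0 < m → m < N → X m ≠ 1)
    (hV : ∀ m, 0 < m → m < N → coeff X V m = 0) (h0 : V 0 = 0) (h1 : V 1 = 0) :
    ∀ m ≤ N, V m = 0 := by
  have hpair : ∀ m, m + 1 ≤ N → V m = 0 ∧ V (m + 1) = 0 := by
    intro m
    induction m with
    | zero => exact fun _ => ⟨h0, h1⟩
    | succ k ih =>
      intro hk
      obtain ⟨hk0, hk1⟩ := ih (by omega)
      refine ⟨hk1, ?_⟩
      have hc := hV (k + 1) (by omega) (by omega)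
      simp only [coeff, Nat.add_sub_cancel, hk0, hk1, mul_zero, zero_add, add_zero] at hc
      exact (mul_eq_zero.mp hc).resolve_left
        (sub_ne_zero.mpr (hX (k + 1) (by omega) (by omega)).symm)
  intro m hm
  rcases m with _ | m
  · exact h0
  · exact (hpair m hm).2

-- `(1 - X 1) • V - V 1 • (1 - partialProd X)` solves the recurrence with zero initial values, so
-- it vanishes; at `N + 1` this forces `V 1 = 0`.
theorem eq_zero_of_coeff_eq_zero_of_partialProd_ne_one {X V : ℕ → K} {N : ℕ}
    (hX : ∀ m, 0 < m → m ≤ N → X m ≠ 1) (hV : ∀ m, 0 < m → m ≤ N → coeff X V m = 0)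
    (h0 : V 0 = 0) (hN : V (N + 1) = 0) (hP : partialProd X (N + 1) ≠ 1) :
    ∀ m ≤ N + 1, V m = 0 := by
  set W : ℕ → K := fun m => 1 - partialProd X m
  set U : ℕ → K := fun m => (1 - X 1) * V m - V 1 * W m
  have hU0 : ∀ m ≤ N + 1, U m = 0 := by
    refine eq_zero_of_coeff_eq_zero (fun m hm hmN => hX m hm (by omega)) ?_ ?_ ?_
    · intro m hm hmN
      obtain ⟨k, rfl⟩ := Nat.exists_eq_add_one_of_ne_zero hm.ne'
      have hW := coeff_one_sub_partialProd X k
      have hVk := hV (k + 1) hm (by omega)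
      simp only [coeff] at hW hVk ⊢
      linear_combination (1 - X 1) * hVk - V 1 * hW
    · simp [U, W, h0, partialProd]
    · simp only [U, W, partialProd, Finset.prod_range_one]
      ring
  have hV1 : V 1 = 0 := by
    have h := hU0 (N + 1) le_rfl
    simp only [U, W, hN, mul_zero, zero_sub, neg_eq_zero, mul_eq_zero] at h
    exact h.resolve_right (sub_ne_zero.mpr hP.symm)
  exact eq_zero_of_coeff_eq_zero (fun m hm hmN => hX m hm (by omega))
    (fun m hm hmN => hV m hm (by omega)) h0 hV1

-- `v` read 1-based, as in the paper, and padded with zeros on both sides, so that `coeff` needs no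
-- boundary cases.
def seqOf {N : ℕ} (v : Fin N → K) (m : ℕ) : K :=
  if h : m ≠ 0 ∧ m - 1 < N then v ⟨m - 1, h.2⟩ else 0

@[simp] lemma seqOf_zero {N : ℕ} (v : Fin N → K) : seqOf v 0 = 0 := by simp [seqOf]

lemma seqOf_add_one {N k : ℕ} (v : Fin N → K) (hk : k < N) : seqOf v (k + 1) = v ⟨k, hk⟩ :=
  dif_pos ⟨k.succ_ne_zero, hk⟩

lemma seqOf_ne {N m : ℕ} {v : Fin N → K} {a : K} (hv : ∀ i, v i ≠ a) (hm0 : m ≠ 0)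
    (hm : m ≤ N) : seqOf v m ≠ a := by
  obtain ⟨k, rfl⟩ := Nat.exists_eq_add_one_of_ne_zero hm0
  rw [seqOf_add_one v (by omega)]
  exact hv _

lemma seqOf_of_lt {N m : ℕ} (v : Fin N → K) (h : N < m) : seqOf v m = 0 :=
  dif_neg (by omega)

lemma seqOf_single {N : ℕ} (k : Fin N) (a : K) (m : ℕ) :
    seqOf (Pi.single k a) m = if m = k + 1 then a else 0 := by
  unfold seqOf
  split_ifs with h1 h2 h2 <;> simp [Pi.single_apply, Fin.ext_iff] at * <;> omega

lemma seqOf_add {N : ℕ} (v w : Fin N → K) : seqOf (v + w) = seqOf v + seqOf w := by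
  ext m; simp only [seqOf, Pi.add_apply]; split_ifs <;> simp

lemma seqOf_smul {N : ℕ} (a : K) (v : Fin N → K) : seqOf (a • v) = a • seqOf v := by
  ext m; simp only [seqOf, Pi.smul_apply]; split_ifs <;> simp

lemma partialProd_seqOf {N : ℕ} (v : Fin N → K) : partialProd (seqOf v) N = ∏ i, v i := by
  rw [partialProd, ← Fin.prod_univ_eq_prod_range]
  exact Finset.prod_congr rfl fun i _ => seqOf_add_one v i.isLt

variable {n : ℕ}

def coeffₗ (x : Fin (n + 1) → K) (i : Fin n) : (Fin n → K) →ₗ[K] K where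
  toFun v := coeff (seqOf x) (seqOf v) (i + 1)
  map_add' v w := by simp only [seqOf_add, coeff, Pi.add_apply]; ring
  map_smul' a v := by
    simp only [seqOf_smul, coeff, Pi.smul_apply, smul_eq_mul, RingHom.id_apply]
    ring

theorem mulVec_eq_add_single {x : Fin (n + 1) → K} {T : Fin n → Matrix (Fin n) (Fin n) K}
    (hT : IsGassnerMatrices x T) (i : Fin n) (v : Fin n → K) :
    T i *ᵥ v = v + Pi.single i (coeffₗ x i v) := by
  suffices (T i).mulVecLin = LinearMap.id + LinearMap.single K _ i ∘ₗ coeffₗ x i from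
    congr($this v)
  ext k j
  have hx : seqOf x (i + 1) = x i.castSucc := seqOf_add_one x i.castSucc.isLt
  have hx' : seqOf x (i + 1 + 1) = x i.succ := seqOf_add_one x i.succ.isLt
  simp only [LinearMap.coe_comp, Function.comp_apply, Matrix.mulVecLin_apply, hT i k,
    LinearMap.add_apply, LinearMap.id_apply, LinearMap.coe_single, coeffₗ, LinearMap.coe_mk,
    AddHom.coe_mk, coeff, seqOf_single, hx, hx', Nat.add_sub_cancel]
  simp only [Pi.add_apply, Pi.smul_apply, Pi.single_apply, apply_ite (fun f : Fin n → K => f j),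
    Fin.ext_iff, smul_eq_mul]
  split_ifs <;> first | omega | ring

variable {x : Fin (n + 1) → K} {T : Fin n → Matrix (Fin n) (Fin n) K}

theorem eq_zero_of_forall_coeffₗ_eq_zero (h1 : ∀ i, x i ≠ 1) (hx : ∏ i, x i ≠ 1)
    {v : Fin n → K} (hv : ∀ i, coeffₗ x i v = 0) : v = 0 := by
  have hseq := eq_zero_of_coeff_eq_zero_of_partialProd_ne_one (X := seqOf x) (V := seqOf v)
    (N := n) (fun m hm hmn => ?_) (fun m hm hmn => ?_) (seqOf_zero v)
    (seqOf_of_lt v (Nat.lt_succ_self n)) (by rwa [partialProd_seqOf])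
  · funext k
    simpa [seqOf_add_one v k.isLt] using hseq (k + 1) (by omega)
  · obtain ⟨k, rfl⟩ := Nat.exists_eq_add_one_of_ne_zero hm.ne'
    rw [seqOf_add_one x (by omega)]
    exact h1 _
  · obtain ⟨k, rfl⟩ := Nat.exists_eq_add_one_of_ne_zero hm.ne'
    exact hv ⟨k, by omega⟩

def fixedVec (x : Fin (n + 1) → K) : Fin n → K := fun k => 1 - partialProd (seqOf x) (k + 1)

lemma fixedVec_ne_zero (h1 : ∀ i, x i ≠ 1) (hn : 0 < n) : fixedVec x ≠ 0 := by
  intro h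
  have h0 : 1 - x 0 = 0 := by simpa [fixedVec, partialProd, seqOf_add_one] using congrFun h ⟨0, hn⟩
  exact h1 0 (sub_eq_zero.mp h0).symm

lemma coeffₗ_fixedVec (hx : ∏ i, x i = 1) (i : Fin n) : coeffₗ x i (fixedVec x) = 0 := by
  have hseq : ∀ m ≤ (i : ℕ) + 2, seqOf (fixedVec x) m = 1 - partialProd (seqOf x) m := by
    intro m hm
    rcases m with _ | k
    · simp [partialProd]
    · rcases Nat.lt_or_ge k n with hk | hk
      · exact seqOf_add_one _ hk
      · obtain rfl : k = n := by omega
        rw [seqOf_of_lt _ (Nat.lt_succ_self k), partialProd_seqOf, hx, sub_self]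
  exact (coeff_congr hseq).trans (coeff_one_sub_partialProd _ _)

lemma mulVec_fixedVec (hT : IsGassnerMatrices x T) (hx : ∏ i, x i = 1) (i : Fin n) :
    T i *ᵥ fixedVec x = fixedVec x := by
  rw [mulVec_eq_add_single hT, coeffₗ_fixedVec hx, Pi.single_zero, add_zero]

lemma single_mem_of_coeffₗ_ne_zero {U : Submodule K (Fin n → K)}
    (hU : ∀ i, ∀ v ∈ U, T i *ᵥ v ∈ U) (hT : IsGassnerMatrices x T) {i : Fin n} {v : Fin n → K}
    (hv : v ∈ U) (hc : coeffₗ x i v ≠ 0) : Pi.single i 1 ∈ U := by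
  have h := U.smul_mem (coeffₗ x i v)⁻¹ (U.sub_mem (hU i v hv) hv)
  rwa [mulVec_eq_add_single hT, add_sub_cancel_left, ← Pi.single_smul, smul_eq_mul,
    inv_mul_cancel₀ hc] at h

lemma single_mem_iff_single_succ_mem {U : Submodule K (Fin n → K)}
    (hU : ∀ i, ∀ v ∈ U, T i *ᵥ v ∈ U) (hT : IsGassnerMatrices x T) (h0 : ∀ i, x i ≠ 0)
    (h1 : ∀ i, x i ≠ 1) (j : ℕ) (hj : j + 1 < n) :
    Pi.single (⟨j, by omega⟩ : Fin n) 1 ∈ U ↔ Pi.single (⟨j + 1, hj⟩ : Fin n) 1 ∈ U := by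
  constructor
  · refine fun h => single_mem_of_coeffₗ_ne_zero hU hT h ?_
    simp only [coeffₗ, coeff, LinearMap.coe_mk, AddHom.coe_mk, seqOf_single, add_tsub_cancel_right,
      Nat.add_eq_left, Nat.add_right_cancel_iff, one_ne_zero, show j + 1 + 1 ≠ j by omega,
      ↓reduceIte, mul_zero, mul_one, zero_add, add_zero]
    exact mul_ne_zero (seqOf_ne h0 (by omega) (by omega))
      (sub_ne_zero.mpr (seqOf_ne h1 (by omega) (by omega)).symm)
  · refine fun h => single_mem_of_coeffₗ_ne_zero hU hT h ?_
    simp only [coeffₗ, coeff, LinearMap.coe_mk, AddHom.coe_mk, seqOf_single, add_tsub_cancel_right,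
      Nat.left_eq_add, one_ne_zero, show j ≠ j + 1 + 1 by omega,
      ↓reduceIte, mul_zero, mul_one, zero_add, add_zero]
    exact sub_ne_zero.mpr (seqOf_ne h1 (by omega) (by omega)).symm

end Gassner

/-- For `n ≥ 2`, the group generated by the specialized reduced Gassner
matrices acts irreducibly on `K^n` (the only invariant subspaces are `0` and `K^n`) if and
only if `x₁ x₂ ⋯ x_{n+1} ≠ 1`. -/
theorem stmt_13 (K : Type*) [Field K] (n : ℕ) (hn : 2 ≤ n)
    (x : Fin (n + 1) → K) (h0 : ∀ i, x i ≠ 0) (h1 : ∀ i, x i ≠ 1)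
    (T : Fin n → Matrix (Fin n) (Fin n) K) (hT : IsGassnerMatrices x T) :
    (∀ U : Submodule K (Fin n → K),
        (∀ i : Fin n, ∀ v ∈ U, (T i).mulVec v ∈ U) → U = ⊥ ∨ U = ⊤) ↔
      ∏ i, x i ≠ 1 := by
  constructor
  · intro hirr hx
    obtain ⟨U, hU, hbot, htop⟩ := exists_invariant_ne_bot_ne_top_of_mulVec_eq_self T
      (by simpa using hn) (Gassner.fixedVec_ne_zero h1 (by omega)) (Gassner.mulVec_fixedVec hT hx)
    exact (hirr U hU).elim hbot htop
  · intro hx U hU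
    refine or_iff_not_imp_left.mpr fun hbot => ?_
    obtain ⟨v, hvU, hv0⟩ := U.ne_bot_iff.mp hbot
    obtain ⟨i₀, hi₀⟩ : ∃ i, Gassner.coeffₗ x i v ≠ 0 := by
      by_contra! h
      exact hv0 (Gassner.eq_zero_of_forall_coeffₗ_eq_zero h1 hx h)
    exact Submodule.eq_top_of_forall_single_mem <| Fin.forall_of_iff_succ
      (Gassner.single_mem_iff_single_succ_mem hU hT h0 h1) i₀
      (Gassner.single_mem_of_coeffₗ_ne_zero hU hT hvU hi₀)
end

section
/- Let K be a field, n ≥ 1, and x_1, …, x_{n+1} ∈ K with x_i ≠ 0 and x_i ≠ 1 for all i, and suppose x_1 x_2 ⋯ x_{n+1} = 1. Write π_i = x_1 x_2 ⋯ x_i and let w ∈ K^n be the column vector with entries w_i = 1 − π_i for 1 ≤ i ≤ n. Then h(x_1, …, x_{n+1}) · w = 0; that is, the nonzero vector w lies in the kernel of the matrix h(x_1, …, x_{n+1}), so the skew-hermitian form is degenerate and w is an isotropic null vector orthogonal to all basis vectors. -/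
open Finset Matrix

namespace Fin

variable {M : Type*} [CommMonoid M] {n : ℕ}

theorem prod_Iio_eq_partialProd (f : Fin n → M) (j : Fin n) :
    ∏ i ∈ Iio j, f i = partialProd f j.castSucc := by
  obtain ⟨m, rfl⟩ : ∃ m, n = m + 1 := ⟨n - 1, by have := j.pos; omega⟩
  induction j using Fin.induction with
  | zero => exact prod_eq_one fun i hi => absurd (mem_Iio.1 hi) (not_lt_zero i)
  | succ j ih =>
    rw [show Iio j.succ = Iic j.castSucc from rfl, ← prod_Iio_mul_eq_prod_Iic, ih,
      ← partialProd_succ, succ_castSucc]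

theorem prod_Iic_eq_partialProd (f : Fin n → M) (j : Fin n) :
    ∏ i ∈ Iic j, f i = partialProd f j.succ := by
  rw [← prod_Iio_mul_eq_prod_Iic, prod_Iio_eq_partialProd, partialProd_succ]

theorem partialProd_last (f : Fin n → M) : partialProd f (last n) = ∏ i, f i := by
  rw [partialProd, val_last, List.take_of_length_le (by simp), List.prod_ofFn]

theorem sum_castSucc_succ_eq_sum_univ {A : Type*} [AddCommMonoid A] (g : Fin (n + 2) → A)
    (h0 : g 0 = 0) (hlast : g (last _) = 0) :
    ∑ k : Fin n, g k.castSucc.succ = ∑ m, g m := by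
  rw [sum_univ_succ, h0, zero_add, sum_univ_castSucc, succ_last, hlast, add_zero]

end Fin

section GassnerForm

variable {K : Type*} [Field K] {n : ℕ}

-- Column `k` of `h` is indexed by `k + 1` in the padded index type `Fin (n + 2)`, so that
-- row `i` is supported on the padded columns `i`, `i + 1`, `i + 2`.
theorem gassnerForm_apply_s15 (x : Fin (n + 1) → K) (i k : Fin n) :
    gassnerForm x i k =
      (if k.castSucc.succ = i.castSucc.castSucc then -(x i.castSucc) / (1 - x i.castSucc) else 0)
      + (if k.castSucc.succ = i.castSucc.succ then
          (1 - x i.castSucc * x i.succ) / ((1 - x i.castSucc) * (1 - x i.succ)) else 0)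
      + (if k.castSucc.succ = i.succ.succ then -1 / (1 - x i.succ) else 0) := by
  unfold gassnerForm
  simp only [Fin.ext_iff, Fin.val_succ, Fin.val_castSucc]
  split_ifs <;> try omega
  all_goals simp only [zero_add, add_zero]
  rw [show k.castSucc = i.succ from Fin.ext (by simp; omega)]

theorem gassnerForm_mulVec_apply (x : Fin (n + 1) → K) (v : Fin (n + 2) → K) (h0 : v 0 = 0)
    (hlast : v (Fin.last _) = 0) (i : Fin n) :
    (gassnerForm x *ᵥ fun k => v k.castSucc.succ) i =
      -(x i.castSucc) / (1 - x i.castSucc) * v i.castSucc.castSucc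
      + (1 - x i.castSucc * x i.succ) / ((1 - x i.castSucc) * (1 - x i.succ)) * v i.castSucc.succ
      + -1 / (1 - x i.succ) * v i.succ.succ := by
  simp only [Matrix.mulVec, dotProduct, gassnerForm_apply_s15]
  rw [Fin.sum_castSucc_succ_eq_sum_univ (fun m => ((if m = i.castSucc.castSucc then _ else 0)
    + (if m = i.castSucc.succ then _ else 0) + (if m = i.succ.succ then _ else 0)) * v m)
    (by simp [h0]) (by simp [hlast])]
  simp [add_mul, sum_add_distrib, ite_mul]

theorem gassner_three_term_eq_zero {a b p : K} (ha : a ≠ 1) (hb : b ≠ 1) :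
    -a / (1 - a) * (1 - p) + (1 - a * b) / ((1 - a) * (1 - b)) * (1 - p * a)
      + -1 / (1 - b) * (1 - p * a * b) = 0 := by
  have ha' : 1 - a ≠ 0 := sub_ne_zero.2 ha.symm
  have hb' : 1 - b ≠ 0 := sub_ne_zero.2 hb.symm
  field_simp
  ring

end GassnerForm

theorem stmt_15_general (K : Type*) [Field K] (n : ℕ) (hn : 1 ≤ n)
    (x : Fin (n + 1) → K) (h1 : ∀ i, x i ≠ 1)
    (hprod : ∏ i, x i = 1)
    (w : Fin n → K) (hw : ∀ i : Fin n, w i = 1 - ∏ j ∈ Finset.Iic i.castSucc, x j) :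
    w ≠ 0 ∧ (gassnerForm x).mulVec w = 0 := by
  set v : Fin (n + 2) → K := fun m => 1 - Fin.partialProd x m
  have hwv : w = fun k => v k.castSucc.succ :=
    funext fun k => by rw [hw, Fin.prod_Iic_eq_partialProd]
  refine ⟨fun hw0 => h1 0 ?_, ?_⟩
  · have h := hw ⟨0, hn⟩
    rw [hw0, Fin.prod_Iic_eq_partialProd, Fin.partialProd_succ] at h
    simp only [Pi.zero_apply, Fin.castSucc_mk, Fin.mk_zero, Fin.castSucc_zero,
      Fin.partialProd_zero, one_mul] at h
    linear_combination h
  · ext i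
    rw [hwv, gassnerForm_mulVec_apply x v (by simp [v]) (by simp [v, Fin.partialProd_last, hprod])]
    simp only [v, ← Fin.succ_castSucc, Fin.partialProd_succ, Pi.zero_apply]
    exact gassner_three_term_eq_zero (h1 _) (h1 _)

/-- Suppose `x₁ x₂ ⋯ x_{n+1} = 1`. With `π_i = x₁ x₂ ⋯ x_i`, the nonzero
vector `w` with entries `w_i = 1 - π_i` lies in the kernel of the Gassner form matrix
`h(x₁, …, x_{n+1})`: the skew-hermitian form is degenerate and `w` is an isotropic null
vector orthogonal to all basis vectors. -/
theorem stmt_15 (K : Type*) [Field K] (n : ℕ) (hn : 1 ≤ n)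
    (x : Fin (n + 1) → K) (h0 : ∀ i, x i ≠ 0) (h1 : ∀ i, x i ≠ 1)
    (hprod : ∏ i, x i = 1)
    (w : Fin n → K) (hw : ∀ i : Fin n, w i = 1 - ∏ j ∈ Finset.Iic i.castSucc, x j) :
    w ≠ 0 ∧ (gassnerForm x).mulVec w = 0 :=
  stmt_15_general K n hn x h1 hprod w hw
end
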